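/- arXiv:2105.09827 — 11 statements merged into one kernel-verified Lean document; each statement's English description precedes it below -/
import Mathlib

section
/- Let G=(V,E) be a finite simple graph with at least one vertex and maximum degree Δ(G), and let K be a finite set of colors. Suppose x : V×K → ℝ, y : E×K → ℝ and z : K → ℝ are nonnegative and satisfy: (i) ∑_{k∈K} x_{vk} = 1 for every v ∈ V; (ii) ∑_{k∈K} y_{ek} = 1 for every e ∈ E; (iii) x_{vk} + ∑_{e∈δ(v)} y_{ek} ≤ z_k for every v ∈ V and k ∈ K; (iv) x_{vk} + x_{wk} + y_{ek} ≤ z_k for every edge e = {v,w} ∈ E and k ∈ K. Then ∑_{k∈K} z_k ≥ Δ(G) + 1. (In particular, the optimal value of the LP relaxation of the assignment model for total coloring is at least Δ(G)+1.) -/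
open Finset

/-- The LP relaxation of the assignment model for total coloring has optimal value
at least `Δ(G) + 1`: any feasible fractional solution `(x, y, z)` satisfies
`∑ k, z k ≥ Δ(G) + 1`. -/
theorem assignment_lp_lower_bound {V K : Type*} [Fintype V] [Nonempty V] [DecidableEq V]
    [Fintype K] (G : SimpleGraph V) [DecidableRel G.Adj]
    (x : V → K → ℝ) (y : Sym2 V → K → ℝ) (z : K → ℝ)
    (hx0 : ∀ v k, 0 ≤ x v k)
    (hy0 : ∀ e ∈ G.edgeFinset, ∀ k, 0 ≤ y e k)
    (hz0 : ∀ k, 0 ≤ z k)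
    (hxsum : ∀ v, ∑ k, x v k = 1)
    (hysum : ∀ e ∈ G.edgeFinset, ∑ k, y e k = 1)
    (hvert : ∀ v k, x v k + ∑ e ∈ G.incidenceFinset v, y e k ≤ z k)
    (hedge : ∀ v w, G.Adj v w → ∀ k, x v k + x w k + y s(v, w) k ≤ z k) :
    (G.maxDegree : ℝ) + 1 ≤ ∑ k, z k := by
  obtain ⟨v, hv⟩ := G.exists_maximal_degree_vertex
  have h1 : ∑ k, (x v k + ∑ e ∈ G.incidenceFinset v, y e k) ≤ ∑ k, z k :=
    Finset.sum_le_sum fun k _ => hvert v k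
  have hsub : G.incidenceFinset v ⊆ G.edgeFinset := by
    intro e he
    rw [SimpleGraph.mem_incidenceFinset] at he
    exact SimpleGraph.mem_edgeFinset.mpr he.1
  have h2 : ∑ k, (x v k + ∑ e ∈ G.incidenceFinset v, y e k)
      = 1 + (G.degree v : ℝ) := by
    rw [Finset.sum_add_distrib, hxsum, Finset.sum_comm]
    congr 1
    rw [Finset.sum_congr rfl fun e he => hysum e (hsub he)]
    simp [SimpleGraph.card_incidenceFinset_eq_degree]
  rw [hv]
  linarith [h1, h2]
end

section
/- Let G=(V,E) be a finite simple graph with at least one vertex and maximum degree Δ(G), and let 𝒯 be the (finite) set of all total matchings of G. If λ : 𝒯 → ℝ is nonnegative and satisfies ∑_{T∈𝒯, v∈T} λ_T ≥ 1 for every vertex v ∈ V and ∑_{T∈𝒯, e∈T} λ_T ≥ 1 for every edge e ∈ E, then ∑_{T∈𝒯} λ_T ≥ Δ(G) + 1. (That is, the optimal value of the LP relaxation of the set covering model for total coloring is at least Δ(G)+1.) -/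
open Finset

variable {V : Type*}

/-- A total matching of a graph `G`: a set `S` of vertices and a set `M` of edges
such that the elements of `S ∪ M` are pairwise non-adjacent. -/
def IsTotalMatching (G : SimpleGraph V) (S : Finset V) (M : Finset (Sym2 V)) : Prop :=
  (↑M ⊆ G.edgeSet) ∧
  (∀ v ∈ S, ∀ w ∈ S, ¬ G.Adj v w) ∧
  (∀ e ∈ M, ∀ f ∈ M, e ≠ f → ∀ v : V, ¬(v ∈ e ∧ v ∈ f)) ∧
  (∀ v ∈ S, ∀ e ∈ M, v ∉ e)

noncomputable instance (G : SimpleGraph V) (S : Finset V) (M : Finset (Sym2 V)) :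
    Decidable (IsTotalMatching G S M) := Classical.dec _

/-- The finite set of all total matchings of `G`. -/
noncomputable def totalMatchings [Fintype V] [DecidableEq V] (G : SimpleGraph V) :
    Finset (Finset V × Finset (Sym2 V)) :=
  Finset.univ.filter fun p => IsTotalMatching G p.1 p.2

/-- The LP relaxation of the set covering model for total coloring has optimal value
at least `Δ(G) + 1`: any nonnegative `λ` indexed by total matchings that fractionally
covers every vertex and every edge satisfies `∑_T λ_T ≥ Δ(G) + 1`. -/
theorem covering_lp_lower_bound [Fintype V] [Nonempty V] [DecidableEq V]
    (G : SimpleGraph V) [DecidableRel G.Adj]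
    (lam : Finset V × Finset (Sym2 V) → ℝ)
    (h0 : ∀ p ∈ totalMatchings G, 0 ≤ lam p)
    (hv : ∀ v : V, 1 ≤ ∑ p ∈ (totalMatchings G).filter (fun p => v ∈ p.1), lam p)
    (he : ∀ e ∈ G.edgeFinset, 1 ≤ ∑ p ∈ (totalMatchings G).filter (fun p => e ∈ p.2), lam p) :
    (G.maxDegree : ℝ) + 1 ≤ ∑ p ∈ totalMatchings G, lam p := by
  classical
  obtain ⟨v, hvdeg⟩ := G.exists_maximal_degree_vertex
  set I := G.incidenceFinset v with hIdef
  have hIcard : (I.card : ℝ) = G.maxDegree := by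
    rw [hvdeg]; exact_mod_cast G.card_incidenceFinset_eq_degree v
  have hIedge : ∀ e ∈ I, e ∈ G.edgeFinset := by
    intro e heI
    rw [hIdef, G.mem_incidenceFinset] at heI
    exact SimpleGraph.mem_edgeFinset.mpr heI.1
  have hIv : ∀ e ∈ I, v ∈ e := by
    intro e heI
    rw [hIdef, G.mem_incidenceFinset] at heI
    exact heI.2
  -- step 1: Δ + 1 ≤ sum of constraints
  have step1 : (G.maxDegree : ℝ) + 1 ≤
      (∑ e ∈ I, ∑ p ∈ (totalMatchings G).filter (fun p => e ∈ p.2), lam p)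
      + ∑ p ∈ (totalMatchings G).filter (fun p => v ∈ p.1), lam p := by
    have h1 : (G.maxDegree : ℝ) ≤ ∑ e ∈ I, ∑ p ∈ (totalMatchings G).filter (fun p => e ∈ p.2), lam p := by
      calc (G.maxDegree : ℝ) = ∑ e ∈ I, (1 : ℝ) := by simp [hIcard.symm]
      _ ≤ _ := Finset.sum_le_sum fun e heI => he e (hIedge e heI)
    linarith [hv v, h1]
  refine step1.trans ?_
  -- rewrite both as sums over totalMatchings
  have hrw : ∀ e : Sym2 V, ∑ p ∈ (totalMatchings G).filter (fun p => e ∈ p.2), lam p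
      = ∑ p ∈ totalMatchings G, if e ∈ p.2 then lam p else 0 := fun e =>
    Finset.sum_filter _ _
  have hrw2 : ∑ p ∈ (totalMatchings G).filter (fun p => v ∈ p.1), lam p
      = ∑ p ∈ totalMatchings G, if v ∈ p.1 then lam p else 0 := Finset.sum_filter _ _
  simp only [hrw, hrw2]
  rw [Finset.sum_comm, ← Finset.sum_add_distrib]
  refine Finset.sum_le_sum fun p hp => ?_
  have hlam := h0 p hp
  have hTM : IsTotalMatching G p.1 p.2 := by
    simpa [totalMatchings] using hp
  obtain ⟨hM, hS, hMM, hSM⟩ := hTM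
  by_cases hvp : v ∈ p.1
  · have hnone : ∀ e ∈ I, ¬ e ∈ p.2 := fun e heI hep => hSM v hvp e hep (hIv e heI)
    rw [Finset.sum_congr rfl fun e heI => if_neg (hnone e heI)]
    simp [hvp]
  · simp only [hvp, if_false, add_zero]
    have hcard : (I.filter (· ∈ p.2)).card ≤ 1 := by
      refine Finset.card_le_one.mpr fun e hei f hfi => ?_
      simp only [Finset.mem_filter] at hei hfi
      by_contra hne
      exact hMM e hei.2 f hfi.2 hne v ⟨hIv e hei.1, hIv f hfi.1⟩
    calc ∑ e ∈ I, (if e ∈ p.2 then lam p else 0)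
        = ∑ e ∈ I.filter (· ∈ p.2), lam p := (Finset.sum_filter _ _).symm
      _ = (I.filter (· ∈ p.2)).card • lam p := Finset.sum_const _
      _ ≤ 1 • lam p := by
          rcases Nat.le_one_iff_eq_zero_or_eq_one.mp hcard with h | h <;> simp [h, hlam]
      _ = lam p := one_smul _ _
end

section
/- Let G=(V,E) be a finite simple graph with D = V ∪ E nonempty, let 𝒯̄ be the set of all maximal total matchings of G, let K be a finite set, and let φ : 𝒯̄ → K be an injective map. Suppose λ : 𝒯̄ → ℝ is nonnegative and satisfies the partitioning constraints ∑_{T∋v} λ_T = 1 for all v ∈ V and ∑_{T∋e} λ_T = 1 for all e ∈ E. Define x_{vk} = ∑_{T∋v, φ(T)=k} λ_T, y_{ek} = ∑_{T∋e, φ(T)=k} λ_T, and z_k = ∑_{φ(T)=k} λ_T. Then (x,y,z) is a feasible solution of the LP relaxation of the assignment model for total coloring, i.e. all variables lie in [0,1], ∑_{k∈K} x_{vk} = 1 for all v, ∑_{k∈K} y_{ek} = 1 for all e, x_{vk} + ∑_{e∈δ(v)} y_{ek} ≤ z_k for all v and k, and x_{vk} + x_{wk} + y_{ek} ≤ z_k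 for all e = {v,w} and k; moreover ∑_{k∈K} z_k = ∑_{T∈𝒯̄} λ_T. (Consequently, the LP bound of the set covering model is at least as strong as that of the assignment model.) -/
open Finset

variable {V : Type*}

/-- A maximal total matching: a total matching not properly contained in another one. -/
def IsMaximalTotalMatching (G : SimpleGraph V) (S : Finset V) (M : Finset (Sym2 V)) : Prop :=
  IsTotalMatching G S M ∧
    ∀ S' M', IsTotalMatching G S' M' → S ⊆ S' → M ⊆ M' → S' = S ∧ M' = M

noncomputable instance (G : SimpleGraph V) (S : Finset V) (M : Finset (Sym2 V)) :
    Decidable (IsMaximalTotalMatching G S M) := Classical.dec _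

/-- The finite set of all maximal total matchings of `G`. -/
noncomputable def maximalTotalMatchings [Fintype V] [DecidableEq V] (G : SimpleGraph V) :
    Finset (Finset V × Finset (Sym2 V)) :=
  Finset.univ.filter fun p => IsMaximalTotalMatching G p.1 p.2

/-- Any feasible solution of the LP relaxation of the set partitioning model for total
coloring, together with an injective assignment `φ` of colors to maximal total matchings,
yields a feasible solution `(x, y, z)` of the LP relaxation of the assignment model with
the same objective value. -/
theorem partitioning_to_assignment {K : Type*} [Fintype V] [Nonempty V] [DecidableEq V]
    [Fintype K] [DecidableEq K] (G : SimpleGraph V) [DecidableRel G.Adj]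
    (phi : Finset V × Finset (Sym2 V) → K)
    (hphi : ∀ p ∈ maximalTotalMatchings G, ∀ q ∈ maximalTotalMatchings G,
      phi p = phi q → p = q)
    (lam : Finset V × Finset (Sym2 V) → ℝ)
    (hlam : ∀ p ∈ maximalTotalMatchings G, 0 ≤ lam p)
    (hcovV : ∀ v : V,
      ∑ p ∈ (maximalTotalMatchings G).filter (fun p => v ∈ p.1), lam p = 1)
    (hcovE : ∀ e ∈ G.edgeFinset,
      ∑ p ∈ (maximalTotalMatchings G).filter (fun p => e ∈ p.2), lam p = 1)
    (x : V → K → ℝ) (y : Sym2 V → K → ℝ) (z : K → ℝ)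
    (hx : ∀ v k, x v k =
      ∑ p ∈ (maximalTotalMatchings G).filter (fun p => v ∈ p.1 ∧ phi p = k), lam p)
    (hy : ∀ e k, y e k =
      ∑ p ∈ (maximalTotalMatchings G).filter (fun p => e ∈ p.2 ∧ phi p = k), lam p)
    (hz : ∀ k, z k =
      ∑ p ∈ (maximalTotalMatchings G).filter (fun p => phi p = k), lam p) :
    (∀ v k, 0 ≤ x v k ∧ x v k ≤ 1) ∧
    (∀ e ∈ G.edgeFinset, ∀ k, 0 ≤ y e k ∧ y e k ≤ 1) ∧
    (∀ k, 0 ≤ z k ∧ z k ≤ 1) ∧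
    (∀ v, ∑ k, x v k = 1) ∧
    (∀ e ∈ G.edgeFinset, ∑ k, y e k = 1) ∧
    (∀ v k, x v k + ∑ e ∈ G.incidenceFinset v, y e k ≤ z k) ∧
    (∀ v w, G.Adj v w → ∀ k, x v k + x w k + y s(v, w) k ≤ z k) ∧
    (∑ k, z k = ∑ p ∈ maximalTotalMatchings G, lam p) := by
  classical
  have hmem : ∀ p ∈ maximalTotalMatchings G, IsMaximalTotalMatching G p.1 p.2 := by
    intro p hp
    simpa [maximalTotalMatchings] using hp
  have hedge : ∀ p ∈ maximalTotalMatchings G, ∀ e ∈ p.2, e ∈ G.edgeFinset := by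
    intro p hp e he
    have := (hmem p hp).1.1 he
    simpa [SimpleGraph.mem_edgeFinset] using this
  -- every maximal total matching has weight at most 1
  have key : ∀ p ∈ maximalTotalMatchings G, lam p ≤ 1 := by
    intro p hp
    rcases p.1.eq_empty_or_nonempty with h1 | ⟨v, hv⟩
    · rcases p.2.eq_empty_or_nonempty with h2 | ⟨e, he⟩
      · exfalso
        obtain ⟨v⟩ := ‹Nonempty V›
        have htm : IsTotalMatching G {v} ∅ := by
          refine ⟨by simp, ?_, by simp, by simp⟩
          intro a ha b hb
          simp only [Finset.mem_singleton] at ha hb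
          subst ha; subst hb
          exact G.irrefl
        have hmax := (hmem p hp).2 {v} ∅ htm (by rw [h1]; exact empty_subset _)
          (by rw [h2])
        have h := hmax.1
        rw [h1] at h
        simp at h
      · have h1le : lam p ≤ ∑ q ∈ (maximalTotalMatchings G).filter (fun q => e ∈ q.2), lam q :=
          Finset.single_le_sum (fun q hq => hlam q (mem_filter.mp hq).1)
            (mem_filter.mpr ⟨hp, he⟩)
        rwa [hcovE e (hedge p hp e he)] at h1le
    · have h1le : lam p ≤ ∑ q ∈ (maximalTotalMatchings G).filter (fun q => v ∈ q.1), lam q :=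
        Finset.single_le_sum (fun q hq => hlam q (mem_filter.mp hq).1)
          (mem_filter.mpr ⟨hp, hv⟩)
      rwa [hcovV v] at h1le
  -- rewriting the variables as sums over the color class
  have hx' : ∀ v k, x v k =
      ∑ p ∈ (maximalTotalMatchings G).filter (fun p => phi p = k),
        if v ∈ p.1 then lam p else 0 := by
    intro v k
    rw [hx v k, ← Finset.sum_filter, Finset.filter_filter]
    congr 1
    ext p
    simp only [mem_filter]
    tauto
  have hy' : ∀ e k, y e k =
      ∑ p ∈ (maximalTotalMatchings G).filter (fun p => phi p = k),
        if e ∈ p.2 then lam p else 0 := by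
    intro e k
    rw [hy e k, ← Finset.sum_filter, Finset.filter_filter]
    congr 1
    ext p
    simp only [mem_filter]
    tauto
  have hxnn : ∀ v k, 0 ≤ x v k := by
    intro v k
    rw [hx v k]
    exact Finset.sum_nonneg fun p hp => hlam p (mem_filter.mp hp).1
  have hynn : ∀ e k, 0 ≤ y e k := by
    intro e k
    rw [hy e k]
    exact Finset.sum_nonneg fun p hp => hlam p (mem_filter.mp hp).1
  have hxle : ∀ v k, x v k ≤ 1 := by
    intro v k
    rw [hx v k]
    calc ∑ p ∈ (maximalTotalMatchings G).filter (fun p => v ∈ p.1 ∧ phi p = k), lam p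
        ≤ ∑ p ∈ (maximalTotalMatchings G).filter (fun p => v ∈ p.1), lam p :=
          Finset.sum_le_sum_of_subset_of_nonneg
            (fun p hp => mem_filter.mpr ⟨(mem_filter.mp hp).1, (mem_filter.mp hp).2.1⟩)
            (fun p hp _ => hlam p (mem_filter.mp hp).1)
      _ = 1 := hcovV v
  have hyle : ∀ e ∈ G.edgeFinset, ∀ k, y e k ≤ 1 := by
    intro e he k
    rw [hy e k]
    calc ∑ p ∈ (maximalTotalMatchings G).filter (fun p => e ∈ p.2 ∧ phi p = k), lam p
        ≤ ∑ p ∈ (maximalTotalMatchings G).filter (fun p => e ∈ p.2), lam p :=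
          Finset.sum_le_sum_of_subset_of_nonneg
            (fun p hp => mem_filter.mpr ⟨(mem_filter.mp hp).1, (mem_filter.mp hp).2.1⟩)
            (fun p hp _ => hlam p (mem_filter.mp hp).1)
      _ = 1 := hcovE e he
  have hcard : ∀ k, ((maximalTotalMatchings G).filter (fun p => phi p = k)).card ≤ 1 := by
    intro k
    rw [Finset.card_le_one]
    intro a ha b hb
    exact hphi a (mem_filter.mp ha).1 b (mem_filter.mp hb).1
      ((mem_filter.mp ha).2.trans (mem_filter.mp hb).2.symm)
  have hznn : ∀ k, 0 ≤ z k := by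
    intro k
    rw [hz k]
    exact Finset.sum_nonneg fun p hp => hlam p (mem_filter.mp hp).1
  have hzle : ∀ k, z k ≤ 1 := by
    intro k
    rw [hz k]
    calc ∑ p ∈ (maximalTotalMatchings G).filter (fun p => phi p = k), lam p
        ≤ ((maximalTotalMatchings G).filter (fun p => phi p = k)).card • (1 : ℝ) :=
          Finset.sum_le_card_nsmul _ _ _ (fun p hp => key p (mem_filter.mp hp).1)
      _ = ((maximalTotalMatchings G).filter (fun p => phi p = k)).card := by simp
      _ ≤ 1 := by exact_mod_cast hcard k
  refine ⟨fun v k => ⟨hxnn v k, hxle v k⟩, fun e he k => ⟨hynn e k, hyle e he k⟩,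
    fun k => ⟨hznn k, hzle k⟩, ?_, ?_, ?_, ?_, ?_⟩
  · -- ∑ k, x v k = 1
    intro v
    have h : ∀ k, x v k = ∑ p ∈ ((maximalTotalMatchings G).filter
        (fun p => v ∈ p.1)).filter (fun p => phi p = k), lam p := by
      intro k
      rw [hx v k, Finset.filter_filter]
    simp_rw [h]
    rw [Finset.sum_fiberwise]
    exact hcovV v
  · -- ∑ k, y e k = 1
    intro e he
    have h : ∀ k, y e k = ∑ p ∈ ((maximalTotalMatchings G).filter
        (fun p => e ∈ p.2)).filter (fun p => phi p = k), lam p := by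
      intro k
      rw [hy e k, Finset.filter_filter]
    simp_rw [h]
    rw [Finset.sum_fiberwise]
    exact hcovE e he
  · -- vertex constraint
    intro v k
    rw [hx' v k, hz k]
    simp_rw [hy']
    rw [Finset.sum_comm, ← Finset.sum_add_distrib]
    apply Finset.sum_le_sum
    intro p hp
    obtain ⟨⟨_, _, hM3, hM4⟩, _⟩ := hmem p (mem_filter.mp hp).1
    have hl : 0 ≤ lam p := hlam p (mem_filter.mp hp).1
    have hvin : ∀ e ∈ G.incidenceFinset v, v ∈ e := by
      intro e he
      simp only [SimpleGraph.mem_incidenceFinset, SimpleGraph.incidenceSet,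
        Set.mem_setOf_eq] at he
      exact he.2
    by_cases hv : v ∈ p.1
    · rw [if_pos hv]
      have h0 : ∑ e ∈ G.incidenceFinset v, (if e ∈ p.2 then lam p else 0) = 0 :=
        Finset.sum_eq_zero fun e he => if_neg (fun h2 => hM4 v hv e h2 (hvin e he))
      rw [h0, add_zero]
    · rw [if_neg hv, zero_add, ← Finset.sum_filter]
      have hc : ((G.incidenceFinset v).filter (fun e => e ∈ p.2)).card ≤ 1 := by
        rw [Finset.card_le_one]
        intro e he f hf
        by_contra hne
        exact hM3 e (mem_filter.mp he).2 f (mem_filter.mp hf).2 hne v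
          ⟨hvin e (mem_filter.mp he).1, hvin f (mem_filter.mp hf).1⟩
      rw [Finset.sum_const, nsmul_eq_mul]
      calc (((G.incidenceFinset v).filter (fun e => e ∈ p.2)).card : ℝ) * lam p
          ≤ 1 * lam p := by
            apply mul_le_mul_of_nonneg_right _ hl
            exact_mod_cast hc
        _ = lam p := one_mul _
  · -- edge constraint
    intro v w hvw k
    rw [hx' v k, hx' w k, hy' s(v, w) k, hz k,
      ← Finset.sum_add_distrib, ← Finset.sum_add_distrib]
    apply Finset.sum_le_sum
    intro p hp
    obtain ⟨⟨_, hM2, _, hM4⟩, _⟩ := hmem p (mem_filter.mp hp).1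
    have hl : 0 ≤ lam p := hlam p (mem_filter.mp hp).1
    have h12 : ¬(v ∈ p.1 ∧ w ∈ p.1) := fun ⟨h1, h2⟩ => hM2 v h1 w h2 hvw
    have h13 : ¬(v ∈ p.1 ∧ s(v, w) ∈ p.2) := fun ⟨h1, h2⟩ =>
      hM4 v h1 _ h2 (by simp)
    have h23 : ¬(w ∈ p.1 ∧ s(v, w) ∈ p.2) := fun ⟨h1, h2⟩ =>
      hM4 w h1 _ h2 (by simp)
    split_ifs <;> first | linarith | tauto
  · -- objective value
    simp_rw [hz]
    exact Finset.sum_fiberwise _ _ _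
end

section
/- Let G=(V,E) be a finite simple graph with n = |V| and m = |E|, and let e = {v,w} ∈ E. The inequality x_v + x_w + y_e ≤ 1 is valid for the Total Matching Polytope P_T(G), and it is facet-defining: there exist n+m affinely independent characteristic vectors of total matchings of G satisfying it with equality. -/
open Finset

variable {V : Type*}

/-- Characteristic vector of a total matching, with vertex coordinates and edge coordinates. -/
def charVec [DecidableEq V] (S : Finset V) (M : Finset (Sym2 V)) :
    (V → ℝ) × (Sym2 V → ℝ) :=
  (fun v => if v ∈ S then 1 else 0, fun e => if e ∈ M then 1 else 0)

/-- The total matching polytope: convex hull of characteristic vectors of total matchings. -/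
def totalMatchingPolytope [DecidableEq V] (G : SimpleGraph V) :
    Set ((V → ℝ) × (Sym2 V → ℝ)) :=
  convexHull ℝ {p | ∃ S M, IsTotalMatching G S M ∧ p = charVec S M}


/-- The assignment of tight total matchings to indices (vertices and edges). -/
def tmP [Fintype V] [DecidableEq V] (G : SimpleGraph V) [DecidableRel G.Adj] (v w : V) :
    V ⊕ {f : Sym2 V // f ∈ G.edgeFinset} → Finset V × Finset (Sym2 V)
  | Sum.inl u => if u = v ∨ u = w then ({u}, ∅) else ({u}, {s(v, w)})
  | Sum.inr f => if f.1 = s(v, w) then (∅, {f.1})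
      else if v ∈ f.1 then ({w}, {f.1})
      else if w ∈ f.1 then ({v}, {f.1})
      else (∅, {f.1, s(v, w)})

section helpers
variable [Fintype V] [DecidableEq V] (G : SimpleGraph V) [DecidableRel G.Adj] (v w : V)

lemma tmP_fst_inl (u : V) : (tmP G v w (Sum.inl u)).1 = {u} := by
  simp only [tmP]; split_ifs <;> rfl

lemma tmP_snd_inl (u : V) : (tmP G v w (Sum.inl u)).2 ⊆ {s(v, w)} := by
  simp only [tmP]; split_ifs <;> simp

lemma tmP_fst_inr (f : {f : Sym2 V // f ∈ G.edgeFinset}) :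
    (tmP G v w (Sum.inr f)).1 ⊆ {v, w} := by
  simp only [tmP]; split_ifs <;> simp [Finset.insert_subset_iff]

lemma tmP_snd_inr (f : {f : Sym2 V // f ∈ G.edgeFinset}) :
    (tmP G v w (Sum.inr f)).2 ⊆ {f.1, s(v, w)} := by
  simp only [tmP]; split_ifs <;> simp [Finset.insert_subset_iff]

lemma tmP_snd_inr_mem (f : {f : Sym2 V // f ∈ G.edgeFinset}) :
    f.1 ∈ (tmP G v w (Sum.inr f)).2 := by
  simp only [tmP]; split_ifs <;> simp

end helpers

/-- For an edge `e = {v, w}`, the inequality `x_v + x_w + y_e ≤ 1` is valid for the total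
matching polytope and facet-defining: there exist `n + m` affinely independent
characteristic vectors of total matchings satisfying it with equality. -/
theorem edge_inequality_facet [Fintype V] [DecidableEq V]
    (G : SimpleGraph V) [DecidableRel G.Adj] (v w : V) (hvw : G.Adj v w) :
    (∀ p ∈ totalMatchingPolytope G, p.1 v + p.1 w + p.2 s(v, w) ≤ 1) ∧
    ∃ F : Finset (Finset V × Finset (Sym2 V)),
      F.card = Fintype.card V + G.edgeFinset.card ∧
      (∀ q ∈ F, IsTotalMatching G q.1 q.2 ∧
        (charVec q.1 q.2).1 v + (charVec q.1 q.2).1 w + (charVec q.1 q.2).2 s(v, w) = 1) ∧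
      AffineIndependent ℝ (fun q : F => charVec q.1.1 q.1.2) := by
  have hne : v ≠ w := hvw.ne
  constructor
  · -- validity
    intro p hp
    have hconv : Convex ℝ {p : (V → ℝ) × (Sym2 V → ℝ) | p.1 v + p.1 w + p.2 s(v, w) ≤ 1} := by
      apply convex_halfSpace_le
      constructor
      · intro a b; simp; ring
      · intro c a; simp; ring
    refine convexHull_min ?_ hconv hp
    rintro p ⟨S, M, ⟨hME, hSS, hMM, hSM⟩, rfl⟩
    simp only [charVec, Set.mem_setOf_eq]
    by_cases hv1 : v ∈ S
    · have hw1 : w ∉ S := fun hw1 => hSS v hv1 w hw1 hvw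
      have he1 : s(v, w) ∉ M := fun he1 => hSM v hv1 _ he1 (Sym2.mem_mk_left v w)
      simp [hv1, hw1, he1]
    · by_cases hw1 : w ∈ S
      · have he1 : s(v, w) ∉ M := fun he1 => hSM w hw1 _ he1 (Sym2.mem_mk_right v w)
        simp [hv1, hw1, he1]
      · by_cases he1 : s(v, w) ∈ M <;> simp [hv1, hw1, he1]
  · -- facet
    set c : V ⊕ {f : Sym2 V // f ∈ G.edgeFinset} → (V → ℝ) × (Sym2 V → ℝ) :=
      fun i => charVec (tmP G v w i).1 (tmP G v w i).2 with hc
    have hLI : LinearIndependent ℝ c := by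
      rw [Fintype.linearIndependent_iff]
      intro g hg
      have h1 : ∀ x : V, (∑ i, if x ∈ (tmP G v w i).1 then g i else 0) = 0 := by
        intro x
        have := congrFun (congrArg Prod.fst hg) x
        simpa [hc, charVec, Prod.fst_sum, Finset.sum_apply, Prod.smul_fst, Pi.smul_apply,
          smul_eq_mul, mul_ite, mul_one, mul_zero] using this
      have h2 : ∀ f : Sym2 V, (∑ i, if f ∈ (tmP G v w i).2 then g i else 0) = 0 := by
        intro f
        have := congrFun (congrArg Prod.snd hg) f
        simpa [hc, charVec, Prod.snd_sum, Finset.sum_apply, Prod.smul_snd, Pi.smul_apply,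
          smul_eq_mul, mul_ite, mul_one, mul_zero] using this
      have hA : ∀ u : V, u ≠ v → u ≠ w → g (Sum.inl u) = 0 := by
        intro u huv huw
        have h := h1 u
        rw [Finset.sum_eq_single (Sum.inl u)] at h
        · rwa [tmP_fst_inl, if_pos (Finset.mem_singleton_self u)] at h
        · rintro (u' | f) _ hiu
          · rw [tmP_fst_inl, if_neg (by
              simp only [Finset.mem_singleton]
              exact fun h' => hiu (congrArg Sum.inl h'.symm))]
          · rw [if_neg]
            intro hmem
            have := tmP_fst_inr G v w f hmem
            simp only [Finset.mem_insert, Finset.mem_singleton] at this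
            tauto
        · intro h'; exact absurd (Finset.mem_univ _) h'
      have hB : ∀ f : {f : Sym2 V // f ∈ G.edgeFinset}, f.1 ≠ s(v, w) → g (Sum.inr f) = 0 := by
        intro f hf
        have h := h2 f.1
        rw [Finset.sum_eq_single (Sum.inr f)] at h
        · rwa [if_pos (tmP_snd_inr_mem G v w f)] at h
        · rintro (u | f') _ hif
          · rw [if_neg]
            intro hmem
            exact hf (Finset.mem_singleton.1 (tmP_snd_inl G v w u hmem))
          · rw [if_neg]
            intro hmem
            rcases Finset.mem_insert.1 (tmP_snd_inr G v w f' hmem) with h' | h'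
            · exact hif (congrArg Sum.inr (Subtype.ext h').symm)
            · exact hf (Finset.mem_singleton.1 h')
        · intro h'; exact absurd (Finset.mem_univ _) h'
      have hC : g (Sum.inl v) = 0 := by
        have h := h1 v
        rw [Finset.sum_eq_single (Sum.inl v)] at h
        · rwa [tmP_fst_inl, if_pos (Finset.mem_singleton_self v)] at h
        · rintro (u' | f) _ hiu
          · rw [tmP_fst_inl, if_neg (by
              simp only [Finset.mem_singleton]
              exact fun h' => hiu (congrArg Sum.inl h'.symm))]
          · by_cases hfe : f.1 = s(v, w)
            · rw [if_neg]
              simp only [tmP, if_pos hfe]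
              exact Finset.notMem_empty v
            · simp [hB f hfe]
        · intro h'; exact absurd (Finset.mem_univ _) h'
      have hD : g (Sum.inl w) = 0 := by
        have h := h1 w
        rw [Finset.sum_eq_single (Sum.inl w)] at h
        · rwa [tmP_fst_inl, if_pos (Finset.mem_singleton_self w)] at h
        · rintro (u' | f) _ hiu
          · rw [tmP_fst_inl, if_neg (by
              simp only [Finset.mem_singleton]
              exact fun h' => hiu (congrArg Sum.inl h'.symm))]
          · by_cases hfe : f.1 = s(v, w)
            · rw [if_neg]
              simp only [tmP, if_pos hfe]
              exact Finset.notMem_empty w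
            · simp [hB f hfe]
        · intro h'; exact absurd (Finset.mem_univ _) h'
      have hE : ∀ f : {f : Sym2 V // f ∈ G.edgeFinset}, f.1 = s(v, w) → g (Sum.inr f) = 0 := by
        intro f hf
        have h := h2 s(v, w)
        rw [Finset.sum_eq_single (Sum.inr f)] at h
        · rwa [if_pos (by rw [← hf]; exact tmP_snd_inr_mem G v w f)] at h
        · rintro (u | f') _ hif
          · by_cases hu : u = v ∨ u = w
            · rw [if_neg]
              intro hmem
              simp only [tmP, if_pos hu] at hmem
              exact Finset.notMem_empty _ hmem
            · push_neg at hu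
              simp [hA u hu.1 hu.2]
          · have hne' : f'.1 ≠ s(v, w) :=
              fun h' => hif (congrArg Sum.inr (Subtype.ext (h'.trans hf.symm)))
            simp [hB f' hne']
        · intro h'; exact absurd (Finset.mem_univ _) h'
      rintro (u | f)
      · by_cases huv : u = v
        · subst huv; exact hC
        · by_cases huw : u = w
          · subst huw; exact hD
          · exact hA u huv huw
      · by_cases hf : f.1 = s(v, w)
        · exact hE f hf
        · exact hB f hf
    have hPinj : Function.Injective (tmP G v w) := by
      intro i j hij
      exact hLI.injective (show c i = c j by simp only [hc]; rw [hij])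
    have hTM : ∀ i, IsTotalMatching G (tmP G v w i).1 (tmP G v w i).2 ∧
        (if v ∈ (tmP G v w i).1 then (1:ℝ) else 0) + (if w ∈ (tmP G v w i).1 then 1 else 0) +
          (if s(v, w) ∈ (tmP G v w i).2 then 1 else 0) = 1 := by
      rintro (u | f)
      · by_cases hu : u = v ∨ u = w
        · constructor
          · refine ⟨by simp [tmP, hu], ?_, by simp [tmP, hu], by simp [tmP, hu]⟩
            simp only [tmP, if_pos hu, Finset.mem_singleton]
            intro a ha b hb
            subst ha; subst hb
            exact G.irrefl
          · rcases hu with rfl | rfl <;> simp [tmP, hne, hne.symm]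
        · push_neg at hu
          have hcond : ¬(u = v ∨ u = w) := not_or.2 ⟨hu.1, hu.2⟩
          constructor
          · refine ⟨?_, ?_, ?_, ?_⟩
            · simp only [tmP, if_neg hcond]
              intro e he
              simp only [Finset.coe_singleton, Set.mem_singleton_iff] at he
              subst he; exact hvw
            · simp only [tmP, if_neg hcond, Finset.mem_singleton]
              intro a ha b hb; subst ha; subst hb; exact G.irrefl
            · simp only [tmP, if_neg hcond, Finset.mem_singleton]
              intro e he f' hf' hne'
              subst he; subst hf'; exact absurd rfl hne'
            · simp only [tmP, if_neg hcond, Finset.mem_singleton]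
              intro a ha e he; subst ha; subst he
              simp [Sym2.mem_iff, hu.1, hu.2]
          · simp [tmP, hcond, Ne.symm hu.1, Ne.symm hu.2]
      · have hfE : f.1 ∈ G.edgeSet := by
          have := f.2; rwa [SimpleGraph.mem_edgeFinset] at this
        by_cases h1 : f.1 = s(v, w)
        · constructor
          · refine ⟨?_, by simp [tmP, h1], ?_, by simp [tmP, h1]⟩
            · simp only [tmP, if_pos h1]
              intro e he
              simp only [Finset.coe_singleton, Set.mem_singleton_iff] at he
              subst he; exact hfE
            · simp only [tmP, if_pos h1, Finset.mem_singleton]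
              intro e he f' hf' hne'
              subst he; subst hf'; exact absurd rfl hne'
          · simp [tmP, h1]
        · by_cases h2 : v ∈ f.1
          · have h3 : w ∉ f.1 := fun h3 => h1 ((Sym2.mem_and_mem_iff hne).1 ⟨h2, h3⟩)
            constructor
            · refine ⟨?_, ?_, ?_, ?_⟩
              · simp only [tmP, if_neg h1, if_pos h2]
                intro e he
                simp only [Finset.coe_singleton, Set.mem_singleton_iff] at he
                subst he; exact hfE
              · simp only [tmP, if_neg h1, if_pos h2, Finset.mem_singleton]
                intro a ha b hb; subst ha; subst hb; exact G.irrefl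
              · simp only [tmP, if_neg h1, if_pos h2, Finset.mem_singleton]
                intro e he f' hf' hne'
                subst he; subst hf'; exact absurd rfl hne'
              · simp only [tmP, if_neg h1, if_pos h2, Finset.mem_singleton]
                intro a ha e he; subst ha; subst he; exact h3
            · simp [tmP, h1, h2, hne, hne.symm, Ne.symm h1]
          · by_cases h3 : w ∈ f.1
            · constructor
              · refine ⟨?_, ?_, ?_, ?_⟩
                · simp only [tmP, if_neg h1, if_neg h2, if_pos h3]
                  intro e he
                  simp only [Finset.coe_singleton, Set.mem_singleton_iff] at he
                  subst he; exact hfE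
                · simp only [tmP, if_neg h1, if_neg h2, if_pos h3, Finset.mem_singleton]
                  intro a ha b hb; subst ha; subst hb; exact G.irrefl
                · simp only [tmP, if_neg h1, if_neg h2, if_pos h3, Finset.mem_singleton]
                  intro e he f' hf' hne'
                  subst he; subst hf'; exact absurd rfl hne'
                · simp only [tmP, if_neg h1, if_neg h2, if_pos h3, Finset.mem_singleton]
                  intro a ha e he; subst ha; subst he; exact h2
              · simp [tmP, h1, h2, h3, hne, hne.symm, Ne.symm h1]
            · constructor
              · refine ⟨?_, by simp [tmP, h1, h2, h3], ?_, by simp [tmP, h1, h2, h3]⟩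
                · simp only [tmP, if_neg h1, if_neg h2, if_neg h3]
                  intro e he
                  simp only [Finset.coe_insert, Finset.coe_singleton, Set.mem_insert_iff,
                    Set.mem_singleton_iff] at he
                  rcases he with rfl | rfl
                  · exact hfE
                  · exact hvw
                · simp only [tmP, if_neg h1, if_neg h2, if_neg h3, Finset.mem_insert,
                    Finset.mem_singleton]
                  rintro e (rfl | rfl) f' (rfl | rfl) hne' x hx
                  · exact hne' rfl
                  · rcases (Sym2.mem_iff).1 hx.2 with rfl | rfl
                    · exact h2 hx.1
                    · exact h3 hx.1
                  · rcases (Sym2.mem_iff).1 hx.1 with rfl | rfl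
                    · exact h2 hx.2
                    · exact h3 hx.2
                  · exact hne' rfl
              · simp [tmP, h1, h2, h3]
    refine ⟨Finset.image (tmP G v w) Finset.univ, ?_, ?_, ?_⟩
    · rw [Finset.card_image_of_injective _ hPinj, Finset.card_univ, Fintype.card_sum,
        Fintype.card_coe]
    · intro q hq
      rcases Finset.mem_image.1 hq with ⟨i, _, rfl⟩
      exact ⟨(hTM i).1, by simpa [charVec] using (hTM i).2⟩
    · have hAI : AffineIndependent ℝ c :=
        affineIndependent_iff.2 fun s w' _ h => linearIndependent_iff'.1 hLI s w' h
      have hbij : Function.Bijective (fun i =>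
          (⟨tmP G v w i, Finset.mem_image_of_mem _ (Finset.mem_univ i)⟩ :
            (Finset.image (tmP G v w) Finset.univ : Finset _))) := by
        constructor
        · intro i j hij
          exact hPinj (congrArg Subtype.val hij)
        · rintro ⟨q, hq⟩
          rcases Finset.mem_image.1 hq with ⟨i, _, rfl⟩
          exact ⟨i, rfl⟩
      set e := Equiv.ofBijective _ hbij with he
      have hfun : (fun q : (Finset.image (tmP G v w) Finset.univ : Finset _) =>
          charVec q.1.1 q.1.2) = c ∘ e.symm := by
        funext q
        have hq : tmP G v w (e.symm q) = q.1 := congrArg Subtype.val (e.apply_symm_apply q)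
        simp only [Function.comp_apply, hc, hq]
      rw [hfun]
      exact hAI.comp_embedding e.symm.toEmbedding
end

section
/- Let G=(V,E) be a finite simple graph with n = |V| and m = |E|, and let a ∈ D = V ∪ E be any element of G. The nonnegativity inequality z_a ≥ 0 is facet-defining for the Total Matching Polytope P_T(G): there exist n+m affinely independent characteristic vectors of total matchings of G whose coordinate at a equals 0. -/
/-!
The empty total matching and the singleton total matchings `{x}`, `x ∈ D \ {a}`, all vanish
at `a`. Their characteristic vectors are `0` and `n + m - 1` distinct standard unit vectors, so
they form `n + m` affinely independent points.
-/

open Finset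

variable {V : Type*}

def elementMatching : V ⊕ Sym2 V → Finset V × Finset (Sym2 V)
  | .inl v => ({v}, ∅)
  | .inr e => (∅, {e})

lemma elementMatching_injective : Function.Injective (elementMatching (V := V)) := by
  rintro (v | e) (w | f) h <;> simp_all [elementMatching]

lemma elementMatching_ne_empty (x : V ⊕ Sym2 V) : elementMatching x ≠ (∅, ∅) := by
  cases x <;> simp [elementMatching]

lemma isTotalMatching_empty (G : SimpleGraph V) : IsTotalMatching G ∅ ∅ := by
  simp [IsTotalMatching]

lemma isTotalMatching_elementMatching (G : SimpleGraph V) [Fintype V] [DecidableRel G.Adj]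
    {x : V ⊕ Sym2 V} (hx : x ∈ (univ : Finset V).disjSum G.edgeFinset) :
    IsTotalMatching G (elementMatching x).1 (elementMatching x).2 := by
  cases x <;> simp_all [IsTotalMatching, elementMatching]

section

variable [DecidableEq V]

def singletonMatchings (X : Finset (V ⊕ Sym2 V)) : Finset (Finset V × Finset (Sym2 V)) :=
  insert (∅, ∅) (X.image elementMatching)

lemma card_singletonMatchings (X : Finset (V ⊕ Sym2 V)) :
    #(singletonMatchings X) = #X + 1 := by
  rw [singletonMatchings, card_insert_of_notMem, card_image_of_injective _ elementMatching_injective]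
  simpa using fun x _ => elementMatching_ne_empty x

lemma charVec_injective :
    Function.Injective (fun q : Finset V × Finset (Sym2 V) => charVec q.1 q.2) := by
  intro p q h
  simp only [charVec, Prod.ext_iff, funext_iff] at h
  ext x
  · have := h.1 x
    split_ifs at this <;> simp_all
  · have := h.2 x
    split_ifs at this <;> simp_all

lemma charVec_elementMatching_apply_of_ne {s : Set (Sym2 V)} {x : V ⊕ Sym2 V} {a : V ⊕ s}
    (hxa : x ≠ Sum.map id Subtype.val a) :
    Sum.elim (charVec (elementMatching x).1 (elementMatching x).2).1
      (fun e : s => (charVec (elementMatching x).1 (elementMatching x).2).2 e) a = 0 := by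
  rcases a with v | e <;> cases x <;> simp_all [charVec, elementMatching, eq_comm]

lemma charVec_empty : charVec (∅ : Finset V) (∅ : Finset (Sym2 V)) = 0 := by
  ext <;> simp [charVec]

variable [Finite V]

noncomputable def unitBasis : Module.Basis (V ⊕ Sym2 V) ℝ ((V → ℝ) × (Sym2 V → ℝ)) :=
  (Pi.basisFun ℝ V).prod (Pi.basisFun ℝ (Sym2 V))

lemma charVec_elementMatching (x : V ⊕ Sym2 V) :
    charVec (elementMatching x).1 (elementMatching x).2 = unitBasis x := by
  cases x <;> ext <;> simp [charVec, elementMatching, unitBasis, Pi.single_apply, eq_comm]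

lemma affineIndependent_charVec_singletonMatchings (X : Finset (V ⊕ Sym2 V)) :
    AffineIndependent ℝ (fun q : singletonMatchings X => charVec q.1.1 q.1.2) := by
  have hB : AffineIndependent ℝ
      (Subtype.val : ({0} ∪ Set.range (unitBasis (V := V)) : Set ((V → ℝ) × (Sym2 V → ℝ))) → _) := by
    have hlin := (unitBasis (V := V)).linearIndependent.linearIndepOn_id
    convert (linearIndependent_set_iff_affineIndependent_vadd_union_singleton ℝ
      (Set.forall_mem_range.2 unitBasis.ne_zero) (0 : (V → ℝ) × (Sym2 V → ℝ))).1 hlin using 3 <;> simp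
  refine AffineIndependent.of_set_of_injective (hB.mono ?_)
    (charVec_injective.comp Subtype.val_injective)
  rintro _ ⟨⟨q, hq⟩, rfl⟩
  simp only [singletonMatchings, mem_insert, mem_image] at hq
  rcases hq with rfl | ⟨x, -, rfl⟩
  · simp [charVec_empty]
  · simp [charVec_elementMatching]

end

/-- For any element `a ∈ D = V ∪ E` of `G`, the nonnegativity inequality `z_a ≥ 0` is
facet-defining for the total matching polytope: there exist `n + m` affinely independent
characteristic vectors of total matchings whose coordinate at `a` equals `0`. -/
theorem nonnegativity_facet [Fintype V] [DecidableEq V]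
    (G : SimpleGraph V) [DecidableRel G.Adj] (a : V ⊕ G.edgeSet) :
    ∃ F : Finset (Finset V × Finset (Sym2 V)),
      F.card = Fintype.card V + G.edgeFinset.card ∧
      (∀ q ∈ F, IsTotalMatching G q.1 q.2 ∧
        Sum.elim (charVec q.1 q.2).1 (fun e : G.edgeSet => (charVec q.1 q.2).2 e) a = 0) ∧
      AffineIndependent ℝ (fun q : F => charVec q.1.1 q.1.2) := by
  set D := (univ : Finset V).disjSum G.edgeFinset
  set a' : V ⊕ Sym2 V := Sum.map id Subtype.val a
  have ha' : a' ∈ D := by rcases a with v | ⟨e, he⟩ <;> simp_all [D, a']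
  refine ⟨singletonMatchings (D.erase a'), ?_, ?_, affineIndependent_charVec_singletonMatchings _⟩
  · rw [card_singletonMatchings, card_erase_add_one ha', card_disjSum, card_univ]
  · intro q hq
    simp only [singletonMatchings, mem_insert, mem_image, mem_erase] at hq
    rcases hq with rfl | ⟨x, ⟨hxa, hxD⟩, rfl⟩
    · exact ⟨isTotalMatching_empty G, by rcases a <;> simp [charVec_empty]⟩
    · exact ⟨isTotalMatching_elementMatching G hxD, charVec_elementMatching_apply_of_ne hxa⟩
end

section
/- For every integer k ≥ 3, the maximum cardinality of a total matching of the cycle graph C_k on k vertices equals ⌊2k/3⌋; in particular, every total matching T of C_k satisfies |T| ≤ ⌊2k/3⌋, and some total matching attains this bound. -/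
open Finset

variable {V : Type*}

open SimpleGraph in
lemma fin_sub_val_one {k : ℕ} (hk : 3 ≤ k) (a b : Fin k) :
    (a - b).val = 1 ↔ (a.val = b.val + 1 ∨ (b.val + 1 = k ∧ a.val = 0)) := by
  rw [Fin.sub_def]
  have ha := a.isLt
  have hb := b.isLt
  simp only [Fin.val_mk]
  rcases le_or_gt b.val a.val with h | h
  · rw [show (k - b.val) + a.val = (a.val - b.val) + k by omega, Nat.add_mod_right,
      Nat.mod_eq_of_lt (by omega)]
    omega
  · rw [Nat.mod_eq_of_lt (by omega)]
    omega

open SimpleGraph in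
lemma cycle_adj_iff {k : ℕ} (hk : 3 ≤ k) (a b : Fin k) :
    (cycleGraph k).Adj a b ↔
      (a.val = b.val + 1 ∨ b.val = a.val + 1 ∨ (b.val + 1 = k ∧ a.val = 0)
        ∨ (a.val + 1 = k ∧ b.val = 0)) := by
  rw [cycleGraph_adj', fin_sub_val_one hk, fin_sub_val_one hk]
  tauto

open SimpleGraph in
lemma edge_rep {k : ℕ} (hk : 3 ≤ k) {e : Sym2 (Fin k)}
    (he : e ∈ (cycleGraph k).edgeSet) :
    ∃ i j : Fin k, e = s(i, j) ∧ (j.val = i.val + 1 ∨ (i.val + 1 = k ∧ j.val = 0)) := by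
  induction e using Sym2.ind with
  | _ u v =>
    rw [SimpleGraph.mem_edgeSet, cycle_adj_iff hk] at he
    rcases he with h | h | h | h
    · exact ⟨v, u, Sym2.eq_swap, Or.inl h⟩
    · exact ⟨u, v, rfl, Or.inl h⟩
    · exact ⟨v, u, Sym2.eq_swap, Or.inr ⟨h.1, h.2⟩⟩
    · exact ⟨u, v, rfl, Or.inr ⟨h.1, h.2⟩⟩

lemma mod_resolve {n x y : ℕ} (hx : x < 2 * n) (hy : y < 2 * n)
    (h : x % n = y % n) : x = y ∨ x = y + n ∨ y = x + n := by
  rcases lt_or_ge x n with h1 | h1 <;> rcases lt_or_ge y n with h2 | h2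
  · rw [Nat.mod_eq_of_lt h1, Nat.mod_eq_of_lt h2] at h; omega
  · rw [Nat.mod_eq_of_lt h1, Nat.mod_eq_sub_mod h2, Nat.mod_eq_of_lt (by omega)] at h; omega
  · rw [Nat.mod_eq_sub_mod h1, Nat.mod_eq_of_lt (by omega), Nat.mod_eq_of_lt h2] at h; omega
  · rw [Nat.mod_eq_sub_mod h1, Nat.mod_eq_of_lt (by omega), Nat.mod_eq_sub_mod h2,
      Nat.mod_eq_of_lt (by omega)] at h; omega

open SimpleGraph in
lemma cycle_tm_upper {k : ℕ} (hk : 3 ≤ k) (S : Finset (Fin k)) (M : Finset (Sym2 (Fin k)))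
    (hT : IsTotalMatching (cycleGraph k) S M) : S.card + M.card ≤ 2 * k / 3 := by
  classical
  obtain ⟨hM, hS, hMM, hSM⟩ := hT
  have hrep : ∀ e ∈ M, ∃ i j : Fin k, e = s(i, j) ∧
      (j.val = i.val + 1 ∨ (i.val + 1 = k ∧ j.val = 0)) :=
    fun e he => edge_rep hk (hM he)
  choose ri rj hrij hstep using hrep
  set P : ({v // v ∈ S} ⊕ {e // e ∈ M}) → ℕ :=
    Sum.elim (fun v => 2 * v.1.val) (fun e => 2 * (ri e.1 e.2).val + 1) with hP
  have hPlt : ∀ a, P a < 2 * k := by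
    rintro (⟨v, hv⟩ | ⟨e, he⟩)
    · simpa [hP] using by have := v.isLt; omega
    · simpa [hP] using by have := (ri e he).isLt; omega
  have sep : ∀ a b, a ≠ b → (P a + 3 ≤ P b ∨ P b + 3 ≤ P a) ∧
      P a + 3 ≤ P b + 2 * k ∧ P b + 3 ≤ P a + 2 * k := by
    rintro (⟨v, hv⟩ | ⟨e, he⟩) (⟨w, hw⟩ | ⟨f, hf⟩) hab
    · -- vertex / vertex
      have hvw : v.val ≠ w.val := by
        intro h
        exact hab (by simp [Fin.ext_iff.mpr h])
      have hadj := hS v hv w hw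
      rw [cycle_adj_iff hk] at hadj
      push_neg at hadj
      have := v.isLt; have := w.isLt
      simp only [hP, Sum.elim_inl]
      omega
    · -- vertex / edge
      have hnm := hSM v hv f hf
      rw [hrij f hf, Sym2.mem_iff] at hnm
      push_neg at hnm
      have h1 : v.val ≠ (ri f hf).val := fun h => hnm.1 (Fin.ext h)
      have h2 : v.val ≠ (rj f hf).val := fun h => hnm.2 (Fin.ext h)
      have hst := hstep f hf
      have := v.isLt; have := (ri f hf).isLt; have := (rj f hf).isLt
      simp only [hP, Sum.elim_inl, Sum.elim_inr]
      omega
    · -- edge / vertex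
      have hnm := hSM w hw e he
      rw [hrij e he, Sym2.mem_iff] at hnm
      push_neg at hnm
      have h1 : w.val ≠ (ri e he).val := fun h => hnm.1 (Fin.ext h)
      have h2 : w.val ≠ (rj e he).val := fun h => hnm.2 (Fin.ext h)
      have hst := hstep e he
      have := w.isLt; have := (ri e he).isLt; have := (rj e he).isLt
      simp only [hP, Sum.elim_inl, Sum.elim_inr]
      omega
    · -- edge / edge
      have hef : e ≠ f := by
        intro h
        exact hab (by subst h; rfl)
      have hie : (ri e he) ∈ e := by
        have : (ri e he) ∈ s(ri e he, rj e he) := Sym2.mem_mk_left _ _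
        rwa [← hrij e he] at this
      have hje : (rj e he) ∈ e := by
        have : (rj e he) ∈ s(ri e he, rj e he) := Sym2.mem_mk_right _ _
        rwa [← hrij e he] at this
      have hi : (ri e he) ∉ f := fun h => hMM e he f hf hef (ri e he) ⟨hie, h⟩
      have hj : (rj e he) ∉ f := fun h => hMM e he f hf hef (rj e he) ⟨hje, h⟩
      rw [hrij f hf, Sym2.mem_iff] at hi hj
      push_neg at hi hj
      have h1 : (ri e he).val ≠ (ri f hf).val := fun h => hi.1 (Fin.ext h)
      have h2 : (ri e he).val ≠ (rj f hf).val := fun h => hi.2 (Fin.ext h)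
      have h3 : (rj e he).val ≠ (ri f hf).val := fun h => hj.1 (Fin.ext h)
      have h4 : (rj e he).val ≠ (rj f hf).val := fun h => hj.2 (Fin.ext h)
      have hst1 := hstep e he
      have hst2 := hstep f hf
      have := (ri e he).isLt; have := (rj e he).isLt
      have := (ri f hf).isLt; have := (rj f hf).isLt
      simp only [hP, Sum.elim_inr]
      omega
  have hk0 : 0 < 2 * k := by omega
  set F : (({v // v ∈ S} ⊕ {e // e ∈ M}) × Fin 3) → Fin (2 * k) :=
    fun x => ⟨(P x.1 + x.2.val) % (2 * k), Nat.mod_lt _ hk0⟩ with hF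
  have hFinj : Function.Injective F := by
    rintro ⟨a, j⟩ ⟨b, j'⟩ hEq
    have h : (P a + j.val) % (2 * k) = (P b + j'.val) % (2 * k) :=
      congrArg Fin.val hEq
    have hj := j.isLt
    have hj' := j'.isLt
    have hPa := hPlt a
    have hPb := hPlt b
    have h2 := mod_resolve (x := P a + j.val) (y := P b + j'.val)
      (by omega) (by omega) h
    by_cases hab : a = b
    · subst hab
      have : j = j' := Fin.ext (by omega)
      rw [this]
    · exfalso
      have := sep a b hab
      omega
  have hcard := Fintype.card_le_of_injective F hFinj
  simp only [Fintype.card_prod, Fintype.card_sum, Fintype.card_coe, Fintype.card_fin] at hcard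
  omega

open SimpleGraph in
lemma cycle_tm_construct {k : ℕ} (hk : 3 ≤ k) :
    ∃ (S : Finset (Fin k)) (M : Finset (Sym2 (Fin k))),
      IsTotalMatching (cycleGraph k) S M ∧ S.card + M.card = 2 * k / 3 := by
  have hk0 : 0 < k := by omega
  refine ⟨(range (k / 3 + k % 3 / 2)).image
            (fun t => (⟨3 * t % k, Nat.mod_lt _ hk0⟩ : Fin k)),
          (range (k / 3)).image
            (fun t => s((⟨(3 * t + 1) % k, Nat.mod_lt _ hk0⟩ : Fin k),
                        (⟨(3 * t + 2) % k, Nat.mod_lt _ hk0⟩ : Fin k))),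
          ⟨?_, ?_, ?_, ?_⟩, ?_⟩
  · -- edges
    intro e he
    simp only [coe_image, Set.mem_image, mem_coe, mem_range] at he
    obtain ⟨t, ht, rfl⟩ := he
    rw [SimpleGraph.mem_edgeSet, cycle_adj_iff hk]
    simp only [Fin.val_mk]
    rw [Nat.mod_eq_of_lt (show 3 * t + 1 < k by omega),
        Nat.mod_eq_of_lt (show 3 * t + 2 < k by omega)]
    omega
  · -- S-S
    intro v hv w hw
    simp only [mem_image, mem_range] at hv hw
    obtain ⟨t1, ht1, rfl⟩ := hv
    obtain ⟨t2, ht2, rfl⟩ := hw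
    rw [cycle_adj_iff hk]
    simp only [Fin.val_mk]
    rw [Nat.mod_eq_of_lt (show 3 * t1 < k by omega),
        Nat.mod_eq_of_lt (show 3 * t2 < k by omega)]
    omega
  · -- M-M
    intro e he f hf hef v hv
    simp only [mem_image, mem_range] at he hf
    obtain ⟨t1, ht1, rfl⟩ := he
    obtain ⟨t2, ht2, rfl⟩ := hf
    by_cases h12 : t1 = t2
    · exact hef (by rw [h12])
    obtain ⟨hv1, hv2⟩ := hv
    rw [Sym2.mem_iff] at hv1 hv2
    have h1 : 3 * t1 + 1 < k := by omega
    have h2 : 3 * t1 + 2 < k := by omega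
    have h3 : 3 * t2 + 1 < k := by omega
    have h4 : 3 * t2 + 2 < k := by omega
    rcases hv1 with rfl | rfl <;> rcases hv2 with h | h <;>
      · simp only [Fin.mk.injEq] at h
        rw [Nat.mod_eq_of_lt (by omega), Nat.mod_eq_of_lt (by omega)] at h
        omega
  · -- S-M
    intro v hv e he
    simp only [mem_image, mem_range] at hv he
    obtain ⟨t1, ht1, rfl⟩ := hv
    obtain ⟨t2, ht2, rfl⟩ := he
    rw [Sym2.mem_iff]
    rintro (h | h) <;>
      · simp only [Fin.mk.injEq] at h
        rw [Nat.mod_eq_of_lt (by omega), Nat.mod_eq_of_lt (by omega)] at h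
        omega
  · -- cardinality
    rw [card_image_of_injOn, card_image_of_injOn, card_range, card_range]
    · omega
    · intro t1 h1 t2 h2 h
      simp only [mem_coe, mem_range] at h1 h2
      rw [Sym2.eq_iff] at h
      rcases h with ⟨h, -⟩ | ⟨h, -⟩ <;>
        · simp only [Fin.mk.injEq] at h
          rw [Nat.mod_eq_of_lt (by omega), Nat.mod_eq_of_lt (by omega)] at h
          omega
    · intro t1 h1 t2 h2 h
      simp only [mem_coe, mem_range] at h1 h2
      simp only [Fin.mk.injEq] at h
      rw [Nat.mod_eq_of_lt (by omega), Nat.mod_eq_of_lt (by omega)] at h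
      omega

/-- The maximum cardinality of a total matching of the cycle `C_k` (`k ≥ 3`) equals
`⌊2k/3⌋`: every total matching has at most `⌊2k/3⌋` elements, and some total matching
attains this bound. -/
theorem cycle_max_total_matching (k : ℕ) (hk : 3 ≤ k) :
    (∀ (S : Finset (Fin k)) (M : Finset (Sym2 (Fin k))),
      IsTotalMatching (SimpleGraph.cycleGraph k) S M → S.card + M.card ≤ 2 * k / 3) ∧
    (∃ (S : Finset (Fin k)) (M : Finset (Sym2 (Fin k))),
      IsTotalMatching (SimpleGraph.cycleGraph k) S M ∧ S.card + M.card = 2 * k / 3) := by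
  exact ⟨fun S M hT => cycle_tm_upper hk S M hT, cycle_tm_construct hk⟩
end

section
/- Let k ≥ 4 be an integer with k ≡ 1 (mod 3) or k ≡ 2 (mod 3), and let C_k be the cycle graph on k vertices (so n+m = 2k). Then the congruent-2k3 cycle inequality ∑_{v∈V(C_k)} x_v + ∑_{e∈E(C_k)} y_e ≤ ⌊2k/3⌋ is valid for the Total Matching Polytope P_T(C_k), and it is facet-defining: there exist 2k affinely independent characteristic vectors of total matchings of C_k of cardinality exactly ⌊2k/3⌋. -/
open Finset

variable {V : Type*}

/-!
List the elements of `C_k` in the cyclic order `v₀, e₀, v₁, e₁, …` by positions in `ZMod (2k)`.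
Two elements are adjacent iff their positions differ by `1` or `2`, so total matchings are exactly
the position sets `P` with `P`, `P + 1`, `P + 2` pairwise disjoint, whence `3 |P| ≤ 2k`.

For the facet, let `m = ⌊2k/3⌋` and take the `2k` translates of `{0, 3, …, 3(m - 1)}`. If a
weight vector `w` kills their incidence vectors, comparing the equations at `p` and `p + 3` shows
that `w` has period `3m`. When `2k = 3m + 1` this period is `-1`, so `w` is constant, hence zero.
When `2k = 3m + 2` the period is `2` and the translates are all orthogonal to the alternating
vector `(-1)^p`; replacing the translate at `0` by `{0, 4, 7, …, 3m - 2}`, on which `(-1)^p`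
sums to `2`, forces `w 0 = 0`, and then `w` is zero again.
-/

open Function Pointwise

theorem AffineIndependent.restrict_image_univ {R ι α E : Type*} [Ring R] [AddCommGroup E]
    [Module R E] [Fintype ι] [DecidableEq α] {f : α → E} {Q : ι → α} (hQ : Injective Q)
    (h : AffineIndependent R (f ∘ Q)) : AffineIndependent R fun a : univ.image Q => f a := by
  let e : ι ≃ univ.image Q := Equiv.ofBijective (fun i => ⟨Q i, mem_image_of_mem Q (mem_univ i)⟩)
    ⟨fun i j hij => hQ (congrArg Subtype.val hij), fun ⟨a, ha⟩ => by
      obtain ⟨i, -, rfl⟩ := mem_image.1 ha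
      exact ⟨i, rfl⟩⟩
  exact (affineIndependent_equiv e).1 h

section TotalMatchingPolytope

variable [Fintype V] [DecidableEq V] {G : SimpleGraph V} [Fintype G.edgeSet]

theorem sum_charVec_eq_card_add_card {S : Finset V} {M : Finset (Sym2 V)} (hM : ↑M ⊆ G.edgeSet) :
    ∑ v, (charVec S M).1 v + ∑ e ∈ G.edgeFinset, (charVec S M).2 e = #S + #M := by
  have hME : M ⊆ G.edgeFinset := fun e he => SimpleGraph.mem_edgeFinset.2 (hM he)
  simp [charVec, inter_eq_right.2 hME]

theorem sum_le_of_mem_totalMatchingPolytope {r : ℝ}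
    (hr : ∀ S M, IsTotalMatching G S M → (#S + #M : ℝ) ≤ r) {p : (V → ℝ) × (Sym2 V → ℝ)}
    (hp : p ∈ totalMatchingPolytope G) : ∑ v, p.1 v + ∑ e ∈ G.edgeFinset, p.2 e ≤ r := by
  have hlin : IsLinearMap ℝ fun q : (V → ℝ) × (Sym2 V → ℝ) =>
      ∑ v, q.1 v + ∑ e ∈ G.edgeFinset, q.2 e :=
    ⟨fun a b => by simp only [Prod.fst_add, Prod.snd_add, Pi.add_apply, sum_add_distrib]; ring,
      fun c a => by
        simp only [Prod.smul_fst, Prod.smul_snd, Pi.smul_apply, smul_eq_mul, ← mul_sum, mul_add]⟩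
  refine convexHull_min ?_ (convex_halfSpace_le hlin r) hp
  rintro _ ⟨S, M, h, rfl⟩
  exact (sum_charVec_eq_card_add_card h.1).trans_le (hr S M h)

end TotalMatchingPolytope

def indicatorVec {α : Type*} [DecidableEq α] (P : Finset α) : α → ℝ :=
  fun p => if p ∈ P then 1 else 0

theorem sum_mul_sum_smul_indicatorVec {ι α : Type*} [Fintype ι] [Fintype α] [DecidableEq α]
    (f : α → ℝ) (w : ι → ℝ) (F : ι → Finset α) :
    ∑ p, f p * (∑ s, w s • indicatorVec (F s)) p = ∑ s, w s * ∑ p ∈ F s, f p := by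
  simp only [Finset.sum_apply, Pi.smul_apply, smul_eq_mul, mul_sum]
  rw [sum_comm]
  simp [indicatorVec, mul_comm]

section Circulant

variable {G : Type*} [AddCommGroup G]

theorem periodic_of_sum_sub_nsmul_eq_zero {M : Type*} [AddCommGroup M] {w : G → M} {d : G}
    {m : ℕ} (hw : ∀ p, ∑ i ∈ range m, w (p - i • d) = 0) : Periodic w (m • d) := by
  cases m with
  | zero => simp [Periodic]
  | succ m =>
    intro q
    have h₁ := hw (q + (m + 1) • d)
    have h₂ := hw (q + m • d)
    rw [sum_range_succ'] at h₁
    rw [sum_range_succ] at h₂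
    have hs : ∀ i : ℕ, q + (m + 1) • d - (i + 1) • d = q + m • d - i • d := fun i => by
      simp only [add_smul, one_smul]
      abel
    simp only [hs, zero_smul, sub_zero] at h₁
    simp only [add_sub_cancel_right] at h₂
    exact add_left_cancel (h₁.trans h₂.symm)

variable [DecidableEq G]

def progression (d : G) (m : ℕ) : Finset G := (range m).image (· • d)

theorem sum_progression {M : Type*} [AddCommMonoid M] {d : G} {m : ℕ}
    (hd : Set.InjOn (· • d) (range m : Set ℕ)) (f : G → M) :
    ∑ c ∈ progression d m, f c = ∑ i ∈ range m, f (i • d) :=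
  sum_image hd

variable [Fintype G]

theorem sum_mul_indicatorVec_vadd (w : G → ℝ) (P : Finset G) (p : G) :
    ∑ s, w s * indicatorVec (s +ᵥ P) p = ∑ c ∈ P, w (p - c) := by
  rw [← univ_inter P, ← sum_ite_mem]
  refine Fintype.sum_equiv (Equiv.subLeft p) _ _ fun s => ?_
  simp [indicatorVec, ← neg_vadd_mem_iff, neg_add_eq_sub]

theorem sum_sub_nsmul_eq_zero_of_sum_smul_indicatorVec {d : G} {m : ℕ}
    (hd : Set.InjOn (· • d) (range m : Set ℕ)) {w : G → ℝ}
    (hw : ∑ s, w s • indicatorVec (s +ᵥ progression d m) = 0) (p : G) :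
    ∑ i ∈ range m, w (p - i • d) = 0 := by
  have := congrFun hw p
  simp only [Finset.sum_apply, Pi.smul_apply, smul_eq_mul, Pi.zero_apply,
    sum_mul_indicatorVec_vadd] at this
  rwa [sum_progression hd] at this

end Circulant

section ThreeSeparated

variable {n : ℕ}

theorem ZMod.injOn_natCast : Set.InjOn (Nat.cast : ℕ → ZMod n) (Set.Iio n) := fun a ha b hb h => by
  simpa [ZMod.val_cast_of_lt ha, ZMod.val_cast_of_lt hb] using congrArg ZMod.val h

theorem ZMod.natCast_eq_natCast_iff_of_lt_two_mul {a b : ℕ} (ha : a < 2 * n) (hb : b < 2 * n) :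
    (a : ZMod n) = b ↔ a = b ∨ a + n = b ∨ b + n = a := by
  rw [ZMod.natCast_eq_natCast_iff']
  refine ⟨fun h => ?_, by rintro (rfl | rfl | rfl) <;> simp⟩
  have ha' := Nat.div_add_mod a n
  have hb' := Nat.div_add_mod b n
  have hq : a / n < 2 := Nat.div_lt_of_lt_mul (by linarith)
  have hr : b / n < 2 := Nat.div_lt_of_lt_mul (by linarith)
  generalize a / n = q at ha' hq
  generalize b / n = r at hb' hr
  interval_cases q <;> interval_cases r <;> omega

def ThreeSeparated (P : Finset (ZMod n)) : Prop :=
  ∀ p ∈ P, p + 1 ∉ P ∧ p + 2 ∉ P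

theorem ThreeSeparated.vadd {P : Finset (ZMod n)} (hP : ThreeSeparated P) (s : ZMod n) :
    ThreeSeparated (s +ᵥ P) := by
  intro _ hx
  obtain ⟨p, hp, rfl⟩ := mem_vadd_finset.1 hx
  simp only [← neg_vadd_mem_iff, vadd_eq_add, neg_add_cancel_left, add_assoc]
  exact hP p hp

theorem ThreeSeparated.three_mul_card_le [NeZero n] {P : Finset (ZMod n)}
    (hP : ThreeSeparated P) : 3 * #P ≤ n := by
  have hdisj : ∀ a c : ZMod n, (c = 1 ∨ c = 2) → Disjoint (a +ᵥ P) ((a + c) +ᵥ P) :=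
    fun a c hc => disjoint_left.2 fun x hx hx' => by
      obtain ⟨q, hq, rfl⟩ := mem_vadd_finset.1 hx
      obtain ⟨r, hr, h⟩ := mem_vadd_finset.1 hx'
      have hqr : q = r + c := by
        simp only [vadd_eq_add] at h
        linear_combination -h
      rcases hc with rfl | rfl
      exacts [(hP r hr).1 (hqr ▸ hq), (hP r hr).2 (hqr ▸ hq)]
  have h₀₁ := hdisj 0 1 (.inl rfl)
  have h₀₂ := hdisj 0 2 (.inr rfl)
  have h₁₂ := hdisj 1 1 (.inl rfl)
  rw [zero_add] at h₀₁ h₀₂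
  rw [one_add_one_eq_two] at h₁₂
  calc 3 * #P = #(((0 : ZMod n) +ᵥ P) ∪ ((1 : ZMod n) +ᵥ P) ∪ ((2 : ZMod n) +ᵥ P)) := by
        rw [card_union_of_disjoint (disjoint_union_left.2 ⟨h₀₂, h₁₂⟩),
          card_union_of_disjoint h₀₁, card_vadd_finset, card_vadd_finset, card_vadd_finset]
        ring
    _ ≤ n := (card_le_univ _).trans_eq (ZMod.card n)

theorem threeSeparated_image_natCast {A : Finset ℕ} (hA : ∀ a ∈ A, a < n)
    (h : ∀ a ∈ A, ∀ b ∈ A, b ≠ a + 1 ∧ b ≠ a + 2 ∧ b + n ≠ a + 1 ∧ b + n ≠ a + 2) :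
    ThreeSeparated (A.image (Nat.cast : ℕ → ZMod n)) := by
  intro _ hp
  obtain ⟨a, ha, rfl⟩ := mem_image.1 hp
  have := hA a ha
  constructor <;> intro hq <;> obtain ⟨b, hb, hab⟩ := mem_image.1 hq <;>
    have := hA b hb <;> have := h a ha b hb
  · rw [← Nat.cast_add_one, ZMod.natCast_eq_natCast_iff_of_lt_two_mul (by omega) (by omega)] at hab
    omega
  · rw [← Nat.cast_ofNat, ← Nat.cast_add,
      ZMod.natCast_eq_natCast_iff_of_lt_two_mul (by omega) (by omega)] at hab
    omega

theorem progression_three_eq_image_natCast (m : ℕ) :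
    progression (3 : ZMod n) m = ((range m).image (3 * ·)).image Nat.cast := by
  rw [progression, image_image]
  congr 1
  funext i
  simp [nsmul_eq_mul, mul_comm]

theorem injOn_nsmul_three {m : ℕ} (h : 3 * m ≤ n) :
    Set.InjOn (· • (3 : ZMod n)) (range m : Set ℕ) := fun i hi j hj hij => by
  simp only [coe_range, Set.mem_Iio] at hi hj
  have h3 : ((3 * i : ℕ) : ZMod n) = ((3 * j : ℕ) : ZMod n) := by
    simpa [nsmul_eq_mul, mul_comm] using hij
  have := ZMod.injOn_natCast (Set.mem_Iio.2 (by omega)) (Set.mem_Iio.2 (by omega)) h3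
  omega

theorem threeSeparated_progression_three {m : ℕ} (h : 3 * m ≤ n) :
    ThreeSeparated (progression (3 : ZMod n) m) := by
  rw [progression_three_eq_image_natCast]
  refine threeSeparated_image_natCast (by simp; omega) ?_
  simp only [mem_image, mem_range]
  rintro _ ⟨i, hi, rfl⟩ _ ⟨j, hj, rfl⟩
  omega

theorem card_progression_three {m : ℕ} (h : 3 * m ≤ n) : #(progression (3 : ZMod n) m) = m :=
  (card_image_of_injOn (injOn_nsmul_three h)).trans (card_range m)

/-- Its gaps are `4, 3, …, 3, 4` when `n = 3m + 2`. -/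
def gapFourSet (m : ℕ) : Finset (ZMod n) :=
  (insert 0 ((range (m - 1)).image (3 * · + 4))).image Nat.cast

theorem lt_of_mem_gapFourSet {m : ℕ} (h : n = 3 * m + 2) {a : ℕ}
    (ha : a ∈ insert 0 ((range (m - 1)).image (3 * · + 4))) : a < n := by
  simp only [mem_insert, mem_image, mem_range] at ha
  omega

theorem threeSeparated_gapFourSet {m : ℕ} (h : n = 3 * m + 2) (hm : m ≠ 0) :
    ThreeSeparated (gapFourSet (n := n) m) := by
  refine threeSeparated_image_natCast (fun a ha => lt_of_mem_gapFourSet h ha) ?_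
  simp only [mem_insert, mem_image, mem_range]
  rintro _ (rfl | ⟨i, hi, rfl⟩) _ (rfl | ⟨j, hj, rfl⟩)
  all_goals omega

theorem card_gapFourSet {m : ℕ} (h : n = 3 * m + 2) (hm : m ≠ 0) :
    #(gapFourSet (n := n) m) = m := by
  rw [gapFourSet,
    card_image_of_injOn (ZMod.injOn_natCast.mono fun a ha => lt_of_mem_gapFourSet h ha),
    card_insert_of_notMem (by simp), card_image_of_injective _ fun i j hij => by simpa using hij,
    card_range]
  omega

end ThreeSeparated

section IndependentFamilies

variable {n : ℕ}

theorem nsmul_three_eq_neg {m c : ℕ} (h : n = 3 * m + c) : m • (3 : ZMod n) = -c := by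
  have : ((3 * m + c : ℕ) : ZMod n) = 0 := h ▸ ZMod.natCast_self n
  push_cast at this
  rw [nsmul_eq_mul]
  linear_combination this

def altSign (p : ZMod n) : ℝ := (-1) ^ p.val

theorem altSign_natCast (hn : Even n) (a : ℕ) : altSign (a : ZMod n) = (-1) ^ a := by
  rw [altSign, ZMod.val_natCast]
  conv_rhs => rw [← Nat.mod_add_div a n]
  rw [pow_add, pow_mul, hn.neg_one_pow, one_pow, mul_one]

theorem altSign_nsmul_three (hn : Even n) (i : ℕ) : altSign (i • (3 : ZMod n)) = (-1) ^ i := by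
  rw [nsmul_eq_mul, mul_comm, ← Nat.cast_ofNat, ← Nat.cast_mul, altSign_natCast hn, pow_mul]
  norm_num

theorem sum_altSign_gapFourSet (hn : Even n) {m : ℕ} (h : n = 3 * m + 2) (hm : m ≠ 0) :
    ∑ p ∈ gapFourSet (n := n) m, altSign p = 2 := by
  have hodd : ¬ Even (m - 1) := by
    have := Nat.even_iff.1 hn
    rw [Nat.not_even_iff_odd, Nat.odd_iff]
    omega
  rw [gapFourSet, sum_image (ZMod.injOn_natCast.mono fun a ha => lt_of_mem_gapFourSet h ha),
    sum_insert (by simp), sum_image fun i _ j _ hij => by simpa using hij]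
  simp only [altSign_natCast hn, pow_add, pow_mul]
  norm_num [neg_one_geom_sum, hodd]

variable [NeZero n]

theorem eq_zero_of_periodic_one {m : ℕ} (hm : m ≠ 0) {d : ZMod n} {w : ZMod n → ℝ}
    (hw : ∀ p, ∑ i ∈ range m, w (p - i • d) = 0) (h1 : Periodic w 1) : w = 0 := by
  have hconst : ∀ x, w x = w 0 := fun x => by simpa using h1.nat_mul_eq x.val
  have h0 := hw 0
  rw [sum_congr rfl fun i _ => hconst _, sum_const, card_range, nsmul_eq_mul] at h0
  funext x
  rw [hconst x]
  exact (mul_eq_zero.1 h0).resolve_left (by exact_mod_cast hm)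

theorem linearIndependent_indicatorVec_vadd_progression {m : ℕ} (h : n = 3 * m + 1)
    (hm : m ≠ 0) :
    LinearIndependent ℝ fun s : ZMod n => indicatorVec (s +ᵥ progression (3 : ZMod n) m) := by
  refine Fintype.linearIndependent_iff.2 fun w hw => ?_
  have hconv := sum_sub_nsmul_eq_zero_of_sum_smul_indicatorVec (injOn_nsmul_three (by omega)) hw
  have h1 : Periodic w 1 := by
    simpa [nsmul_three_eq_neg h] using (periodic_of_sum_sub_nsmul_eq_zero hconv).neg
  exact congrFun (eq_zero_of_periodic_one hm hconv h1)

theorem eq_zero_of_periodic_two {m : ℕ} (hm : m ≠ 0) {d : ZMod n} {w : ZMod n → ℝ}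
    (hw : ∀ p, ∑ i ∈ range m, w (p - i • d) = 0) (h2 : Periodic w 2) (h0 : w 0 = 0) : w = 0 := by
  have hsucc : (fun p => w p + w (p + 1)) = 0 := by
    refine eq_zero_of_periodic_one hm (d := d) (fun p => ?_) (fun p => ?_)
    · simp only [sum_add_distrib, hw, sub_add_eq_add_sub, zero_add]
    · simp only [add_assoc, one_add_one_eq_two, h2 p, add_comm (w (p + 1))]
  have hnat : ∀ t : ℕ, w t = 0 := by
    intro t
    induction t with
    | zero => simpa using h0
    | succ t ih =>
      have := congrFun hsucc t
      simp only [Pi.zero_apply] at this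
      push_cast
      linarith
  funext s
  rw [← ZMod.natCast_zmod_val s]
  exact hnat _

theorem altSign_add (hn : Even n) (p q : ZMod n) : altSign (p + q) = altSign p * altSign q := by
  rw [← ZMod.natCast_zmod_val p, ← ZMod.natCast_zmod_val q, ← Nat.cast_add,
    altSign_natCast hn, altSign_natCast hn, altSign_natCast hn, pow_add]

theorem sum_altSign_vadd_progression (hn : Even n) {m : ℕ} (h : 3 * m ≤ n) (s : ZMod n) :
    ∑ p ∈ s +ᵥ progression (3 : ZMod n) m, altSign p = if Even m then 0 else altSign s := by
  rw [vadd_finset_def, sum_image (AddAction.injective s).injOn,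
    sum_progression (injOn_nsmul_three h)]
  simp only [vadd_eq_add, altSign_add hn, altSign_nsmul_three hn, ← mul_sum, neg_one_geom_sum]
  split_ifs <;> simp

theorem linearIndependent_indicatorVec_gapFourSet_or_vadd (hn : Even n) {m : ℕ}
    (h : n = 3 * m + 2) (hm : m ≠ 0) :
    LinearIndependent ℝ fun s : ZMod n =>
      indicatorVec (if s = 0 then gapFourSet m else s +ᵥ progression (3 : ZMod n) m) := by
  refine Fintype.linearIndependent_iff.2 fun w hw => ?_
  have hm3 : 3 * m ≤ n := by omega
  have heven : Even m := Nat.even_iff.2 (by have := Nat.even_iff.1 hn; omega)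
  have hw0 : w 0 = 0 := by
    have hpair := congrArg (fun v => ∑ p, altSign p * v p) hw
    simp only [sum_mul_sum_smul_indicatorVec, Pi.zero_apply, mul_zero, sum_const_zero] at hpair
    rw [sum_eq_single 0 (fun s _ hs => by
        rw [if_neg hs, sum_altSign_vadd_progression hn hm3, if_pos heven, mul_zero])
      (by simp), if_pos rfl, sum_altSign_gapFourSet hn h hm] at hpair
    linarith
  have hw' : ∑ s, w s • indicatorVec (s +ᵥ progression (3 : ZMod n) m) = 0 := by
    rw [← hw]
    refine sum_congr rfl fun s _ => ?_
    by_cases hs : s = 0 <;> simp [hs, hw0]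
  have hconv := sum_sub_nsmul_eq_zero_of_sum_smul_indicatorVec (injOn_nsmul_three hm3) hw'
  have h2 : Periodic w 2 := by
    simpa [nsmul_three_eq_neg h] using (periodic_of_sum_sub_nsmul_eq_zero hconv).neg
  exact congrFun (eq_zero_of_periodic_two hm hconv h2 hw0)

theorem exists_linearIndependent_threeSeparated (hn : Even n) (h3 : n % 3 ≠ 0) (h4 : 4 ≤ n) :
    ∃ fam : ZMod n → Finset (ZMod n), (∀ s, ThreeSeparated (fam s) ∧ #(fam s) = n / 3) ∧
      LinearIndependent ℝ fun s => indicatorVec (fam s) := by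
  have htranslate : ∀ s : ZMod n, ThreeSeparated (s +ᵥ progression (3 : ZMod n) (n / 3)) ∧
      #(s +ᵥ progression (3 : ZMod n) (n / 3)) = n / 3 := fun s =>
    ⟨(threeSeparated_progression_three (by omega)).vadd s,
      (card_vadd_finset _ _).trans (card_progression_three (by omega))⟩
  rcases (by omega : n = 3 * (n / 3) + 1 ∨ n = 3 * (n / 3) + 2) with h | h
  · exact ⟨_, htranslate, linearIndependent_indicatorVec_vadd_progression h (by omega)⟩
  · refine ⟨_, fun s => ?_, linearIndependent_indicatorVec_gapFourSet_or_vadd hn h (by omega)⟩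
    split_ifs
    · exact ⟨threeSeparated_gapFourSet h (by omega), card_gapFourSet h (by omega)⟩
    · exact htranslate s

end IndependentFamilies

section CycleEncoding

open SimpleGraph

variable {k : ℕ}

/-- Position `2v` is the vertex `v`, position `2v + 1` the edge `{v, v + 1}`. -/
def vertexPos (v : Fin k) : ZMod (2 * k) := ((2 * v.val : ℕ) : ZMod (2 * k))

theorem val_vertexPos (v : Fin k) : (vertexPos v).val = 2 * v.val :=
  ZMod.val_cast_of_lt (by omega)

theorem val_vertexPos_add_one (v : Fin k) : (vertexPos v + 1).val = 2 * v.val + 1 := by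
  rw [vertexPos, ← Nat.cast_add_one, ZMod.val_cast_of_lt (by omega)]

theorem vertexPos_injective : Injective (vertexPos (k := k)) := fun u v h =>
  Fin.ext (by have := congrArg ZMod.val h; rw [val_vertexPos, val_vertexPos] at this; omega)

theorem vertexPos_ne_vertexPos_add_one (u v : Fin k) : vertexPos u ≠ vertexPos v + 1 :=
  fun h => by
    have := congrArg ZMod.val h
    rw [val_vertexPos, val_vertexPos_add_one] at this
    omega

variable [NeZero k]

def vertexOfPos (p : ZMod (2 * k)) : Fin k := ⟨p.val / 2, by have := p.val_lt; omega⟩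

theorem vertexOfPos_vertexPos (v : Fin k) : vertexOfPos (vertexPos v) = v :=
  Fin.ext (by simp [vertexOfPos, val_vertexPos])

theorem vertexOfPos_vertexPos_add_one (v : Fin k) : vertexOfPos (vertexPos v + 1) = v :=
  Fin.ext (by simp only [vertexOfPos, val_vertexPos_add_one]; omega)

theorem exists_vertexPos (p : ZMod (2 * k)) : ∃ v, p = vertexPos v ∨ p = vertexPos v + 1 := by
  refine ⟨vertexOfPos p, ?_⟩
  rcases Nat.even_or_odd' p.val with ⟨t, ht | ht⟩ <;> [left; right] <;> apply ZMod.val_injective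
  · rw [val_vertexPos]
    simp [vertexOfPos, ht]
  · rw [val_vertexPos_add_one]
    simp only [vertexOfPos, ht]
    omega

theorem vertexPos_add_one (v : Fin k) : vertexPos (v + 1) = vertexPos v + 2 := by
  rw [vertexPos, vertexPos, Fin.val_add, Fin.val_one', Nat.add_mod_mod, ← Nat.mul_mod_mul_left,
    ZMod.natCast_mod]
  push_cast
  ring

theorem cycleGraph_adj_iff (hk : 2 ≤ k) {u v : Fin k} :
    (cycleGraph k).Adj u v ↔ v = u + 1 ∨ u = v + 1 := by
  obtain ⟨n, rfl⟩ : ∃ n, k = n + 2 := ⟨k - 2, by omega⟩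
  rw [cycleGraph_adj, sub_eq_iff_eq_add, sub_eq_iff_eq_add, add_comm 1 v, add_comm 1 u]
  tauto

def cycleEdge (v : Fin k) : Sym2 (Fin k) := s(v, v + 1)

theorem cycleEdge_mem_edgeSet (hk : 2 ≤ k) (v : Fin k) :
    cycleEdge v ∈ (cycleGraph k).edgeSet :=
  (cycleGraph_adj_iff hk).2 (.inl rfl)

theorem exists_cycleEdge_eq (hk : 2 ≤ k) {e : Sym2 (Fin k)} (he : e ∈ (cycleGraph k).edgeSet) :
    ∃ v, cycleEdge v = e := by
  induction e using Sym2.ind with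
  | _ u v =>
    rw [mem_edgeSet, cycleGraph_adj_iff hk] at he
    rcases he with rfl | rfl
    exacts [⟨u, rfl⟩, ⟨v, Sym2.eq_swap⟩]

theorem cycleEdge_injective (hk : 3 ≤ k) : Injective (cycleEdge (k := k)) := by
  intro u v h
  rcases Sym2.eq_iff.1 h with ⟨huv, -⟩ | ⟨rfl, hv⟩
  · exact huv
  · have h2 : (1 + 1 : Fin k) = 0 := add_eq_left.1 ((add_assoc _ _ _).symm.trans hv)
    have := congrArg Fin.val h2
    rw [Fin.val_add, Fin.val_one', Nat.mod_eq_of_lt (by omega : 1 < k),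
      Nat.mod_eq_of_lt (by omega : 1 + 1 < k)] at this
    simp at this

theorem cycleEdge_ne_cycleEdge_add_one (hk : 3 ≤ k) (v : Fin k) :
    cycleEdge v ≠ cycleEdge (v + 1) := fun h => by
  have h1 : (1 : Fin k) = 0 := add_eq_left.1 (cycleEdge_injective hk h).symm
  have := congrArg Fin.val h1
  rw [Fin.val_one', Nat.mod_eq_of_lt (by omega)] at this
  simp at this

def encode (S : Finset (Fin k)) (M : Finset (Sym2 (Fin k))) : Finset (ZMod (2 * k)) :=
  {p | if Even p.val then vertexOfPos p ∈ S else cycleEdge (vertexOfPos p) ∈ M}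

def decode (P : Finset (ZMod (2 * k))) : Finset (Fin k) × Finset (Sym2 (Fin k)) :=
  (({v | vertexPos v ∈ P} : Finset (Fin k)),
    ({v | vertexPos v + 1 ∈ P} : Finset (Fin k)).image cycleEdge)

variable {S : Finset (Fin k)} {M : Finset (Sym2 (Fin k))}

theorem vertexPos_mem_encode {v : Fin k} : vertexPos v ∈ encode S M ↔ v ∈ S := by
  simp [encode, val_vertexPos, vertexOfPos_vertexPos]

theorem vertexPos_add_one_mem_encode {v : Fin k} :
    vertexPos v + 1 ∈ encode S M ↔ cycleEdge v ∈ M := by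
  simp [encode, val_vertexPos_add_one, vertexOfPos_vertexPos_add_one, parity_simps]

theorem encode_decode (hk : 3 ≤ k) (P : Finset (ZMod (2 * k))) :
    encode (decode P).1 (decode P).2 = P := by
  ext p
  obtain ⟨v, rfl | rfl⟩ := exists_vertexPos p
  · simp [vertexPos_mem_encode, decode]
  · simp [vertexPos_add_one_mem_encode, decode, (cycleEdge_injective hk).mem_finset_image]

theorem card_encode (hk : 3 ≤ k) (hM : ↑M ⊆ (cycleGraph k).edgeSet) :
    #(encode S M) = #S + #M := by
  have hne : ∀ u v : Fin k, vertexPos v + 1 ≠ vertexPos u := fun u v h =>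
    vertexPos_ne_vertexPos_add_one u v h.symm
  have hinj : Injective fun v : Fin k => vertexPos v + 1 :=
    (add_left_injective 1).comp vertexPos_injective
  have hsplit : encode S M = S.image vertexPos ∪
      ({v | cycleEdge v ∈ M} : Finset (Fin k)).image (vertexPos · + 1) := by
    ext p
    obtain ⟨v, rfl | rfl⟩ := exists_vertexPos p
    · simp [vertexPos_mem_encode, vertexPos_injective.mem_finset_image, hne]
    · simp [vertexPos_add_one_mem_encode, vertexPos_ne_vertexPos_add_one,
        vertexPos_injective.eq_iff]
  have hM' : ({v | cycleEdge v ∈ M} : Finset (Fin k)).image cycleEdge = M := by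
    ext e
    simp only [mem_image, mem_filter, mem_univ, true_and]
    exact ⟨fun ⟨v, hv, hve⟩ => hve ▸ hv, fun he =>
      (exists_cycleEdge_eq (by omega) (hM he)).imp fun v (hv : cycleEdge v = e) => ⟨hv ▸ he, hv⟩⟩
  rw [hsplit, card_union_of_disjoint, card_image_of_injective _ vertexPos_injective,
    card_image_of_injective _ hinj]
  · conv_rhs => rw [← hM', card_image_of_injective _ (cycleEdge_injective hk)]
  · simp only [Finset.disjoint_left, mem_image]
    rintro _ ⟨u, -, rfl⟩ ⟨v, -, h⟩
    exact vertexPos_ne_vertexPos_add_one u v h.symm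

theorem threeSeparated_encode (hk : 3 ≤ k) (h : IsTotalMatching (cycleGraph k) S M) :
    ThreeSeparated (encode S M) := by
  obtain ⟨-, hSS, hMM, hSM⟩ := h
  intro p hp
  obtain ⟨v, rfl | rfl⟩ := exists_vertexPos p
  · rw [vertexPos_mem_encode] at hp
    rw [vertexPos_add_one_mem_encode, ← vertexPos_add_one, vertexPos_mem_encode]
    exact ⟨fun he => hSM v hp _ he (Sym2.mem_mk_left _ _),
      fun hv => hSS v hp _ hv ((cycleGraph_adj_iff (by omega)).2 (.inl rfl))⟩
  · rw [vertexPos_add_one_mem_encode] at hp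
    rw [add_assoc, one_add_one_eq_two, ← vertexPos_add_one, vertexPos_mem_encode, add_right_comm,
      ← vertexPos_add_one, vertexPos_add_one_mem_encode]
    exact ⟨fun hv => hSM _ hv _ hp (Sym2.mem_mk_right _ _),
      fun he => hMM _ hp _ he (cycleEdge_ne_cycleEdge_add_one hk v) (v + 1)
        ⟨Sym2.mem_mk_right _ _, Sym2.mem_mk_left _ _⟩⟩

theorem isTotalMatching_decode (hk : 3 ≤ k) {P : Finset (ZMod (2 * k))}
    (hP : ThreeSeparated P) : IsTotalMatching (cycleGraph k) (decode P).1 (decode P).2 := by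
  have hk2 : 2 ≤ k := by omega
  have hV : ∀ {v}, v ∈ (decode P).1 ↔ vertexPos v ∈ P := by simp [decode]
  have hE : ∀ e ∈ (decode P).2, ∃ v, vertexPos v + 1 ∈ P ∧ cycleEdge v = e := by simp [decode]
  have hshift : ∀ v : Fin k, vertexPos (v + 1) + 1 = vertexPos v + 1 + 2 := fun v => by
    rw [vertexPos_add_one, add_right_comm]
  refine ⟨?_, fun u hu v hv huv => ?_, ?_, ?_⟩
  · intro e he
    obtain ⟨v, -, rfl⟩ := hE e he
    exact cycleEdge_mem_edgeSet hk2 v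
  · rw [hV] at hu hv
    rcases (cycleGraph_adj_iff hk2).1 huv with rfl | rfl
    · exact (hP _ hu).2 (vertexPos_add_one u ▸ hv)
    · exact (hP _ hv).2 (vertexPos_add_one v ▸ hu)
  · rintro _ he _ hf hne x ⟨hxe, hxf⟩
    obtain ⟨i, hi, rfl⟩ := hE _ he
    obtain ⟨j, hj, rfl⟩ := hE _ hf
    rw [cycleEdge, Sym2.mem_iff] at hxe hxf
    rcases hxe with rfl | rfl <;> rcases hxf with h | h
    · exact hne (congrArg cycleEdge h)
    · subst h
      exact (hP _ hj).2 (hshift j ▸ hi)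
    · subst h
      exact (hP _ hi).2 (hshift i ▸ hj)
    · exact hne (congrArg cycleEdge (add_right_cancel h))
  · rintro v hv _ he hve
    obtain ⟨i, hi, rfl⟩ := hE _ he
    rw [hV] at hv
    rw [cycleEdge, Sym2.mem_iff] at hve
    rcases hve with rfl | rfl
    · exact (hP _ hv).1 hi
    · exact (hP _ hi).1 (by rwa [add_assoc, one_add_one_eq_two, ← vertexPos_add_one])

theorem three_mul_card_add_card_le (hk : 3 ≤ k) (h : IsTotalMatching (cycleGraph k) S M) :
    3 * (#S + #M) ≤ 2 * k :=
  card_encode hk h.1 ▸ (threeSeparated_encode hk h).three_mul_card_le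

def linearEncode : ((Fin k → ℝ) × (Sym2 (Fin k) → ℝ)) →ₗ[ℝ] (ZMod (2 * k) → ℝ) :=
  LinearMap.pi fun p =>
    if Even p.val then (LinearMap.proj (vertexOfPos p)).comp (LinearMap.fst ℝ _ _)
    else (LinearMap.proj (cycleEdge (vertexOfPos p))).comp (LinearMap.snd ℝ _ _)

theorem linearEncode_charVec : linearEncode (charVec S M) = indicatorVec (encode S M) := by
  funext p
  simp only [linearEncode, LinearMap.pi_apply, encode, indicatorVec, charVec, mem_filter,
    mem_univ, true_and]
  split_ifs <;> simp_all

theorem exists_affineIndependent_totalMatchings (hk : 3 ≤ k)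
    {fam : ZMod (2 * k) → Finset (ZMod (2 * k))} {r : ℕ}
    (hfam : ∀ s, ThreeSeparated (fam s) ∧ #(fam s) = r)
    (hind : LinearIndependent ℝ fun s => indicatorVec (fam s)) :
    ∃ F : Finset (Finset (Fin k) × Finset (Sym2 (Fin k))), #F = 2 * k ∧
      (∀ q ∈ F, IsTotalMatching (cycleGraph k) q.1 q.2 ∧ #q.1 + #q.2 = r) ∧
      AffineIndependent ℝ (fun q : F => charVec q.1.1 q.1.2) := by
  let Q := fun s => decode (fam s)
  have hQ : AffineIndependent ℝ ((fun q => charVec q.1 q.2) ∘ Q) := by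
    refine AffineIndependent.of_comp linearEncode.toAffineMap ?_
    convert hind.affineIndependent using 1
    funext s
    simp [Q, linearEncode_charVec, encode_decode hk]
  have hinj : Injective Q := hQ.injective.of_comp
  refine ⟨univ.image Q, by rw [card_image_of_injective _ hinj, card_univ, ZMod.card], ?_,
    hQ.restrict_image_univ hinj⟩
  simp only [mem_image, mem_univ, true_and]
  rintro _ ⟨s, rfl⟩
  have htm := isTotalMatching_decode hk (hfam s).1
  exact ⟨htm, by rw [← card_encode hk htm.1, encode_decode hk, (hfam s).2]⟩

end CycleEncoding

/-- For `k ≥ 4` with `k ≡ 1, 2 (mod 3)`, the congruent-2k3 cycle inequality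
`∑_v x_v + ∑_e y_e ≤ ⌊2k/3⌋` is valid for the total matching polytope of the cycle `C_k`
and facet-defining: there exist `2k` affinely independent characteristic vectors of total
matchings of `C_k` of cardinality exactly `⌊2k/3⌋`. -/
theorem congruent_cycle_inequality_facet (k : ℕ) (hk : 4 ≤ k)
    (hmod : k % 3 = 1 ∨ k % 3 = 2) :
    (∀ p ∈ totalMatchingPolytope (SimpleGraph.cycleGraph k),
      ∑ v : Fin k, p.1 v + ∑ e ∈ (SimpleGraph.cycleGraph k).edgeFinset, p.2 e
        ≤ ((2 * k / 3 : ℕ) : ℝ)) ∧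
    ∃ F : Finset (Finset (Fin k) × Finset (Sym2 (Fin k))),
      F.card = 2 * k ∧
      (∀ q ∈ F, IsTotalMatching (SimpleGraph.cycleGraph k) q.1 q.2 ∧
        q.1.card + q.2.card = 2 * k / 3) ∧
      AffineIndependent ℝ (fun q : F => charVec q.1.1 q.1.2) := by
  have : NeZero k := ⟨by omega⟩
  refine ⟨fun p hp => sum_le_of_mem_totalMatchingPolytope (fun S M h => ?_) hp, ?_⟩
  · have := three_mul_card_add_card_le (by omega) h
    exact_mod_cast (by omega : #S + #M ≤ 2 * k / 3)
  · obtain ⟨fam, hfam, hind⟩ :=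
      exists_linearIndependent_threeSeparated (even_two_mul k) (by omega) (by omega)
    exact exists_affineIndependent_totalMatchings (by omega) hfam hind
end

section
/- Let G=(V,E) be a finite simple graph with n = |V| and m = |E| containing an induced cycle C_4 on four vertices (the four vertices of C_4 span exactly the four cycle edges in G). Then the inequality ∑_{v∈V(C_4)} x_v + ∑_{e∈E(C_4)} y_e ≤ 2 is valid for the Total Matching Polytope P_T(G), and it is facet-defining: there exist n+m affinely independent characteristic vectors of total matchings of G satisfying it with equality. -/
open Finset

variable {V : Type*}

set_option maxHeartbeats 1000000 in
private lemma boolAux : ∀ b1 b2 b3 b4 b5 b6 b7 b8 : Bool,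
    (b1 && b2) = false → (b2 && b3) = false → (b3 && b4) = false → (b4 && b1) = false →
    (b5 && b6) = false → (b6 && b7) = false → (b7 && b8) = false → (b8 && b5) = false →
    (b1 && b5) = false → (b1 && b8) = false → (b2 && b5) = false → (b2 && b6) = false →
    (b3 && b6) = false → (b3 && b7) = false → (b4 && b7) = false → (b4 && b8) = false →
    b1.toNat + b2.toNat + b3.toNat + b4.toNat + b5.toNat + b6.toNat + b7.toNat + b8.toNat ≤ 2 := by
  decide
private lemma tob (p q : Prop) [Decidable p] [Decidable q] (h : ¬(p ∧ q)) :
    (decide p && decide q) = false := by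
  simp only [Bool.and_eq_false_iff, decide_eq_false_iff_not]
  tauto

private lemma iteAux (p1 p2 p3 p4 p5 p6 p7 p8 : Prop)
    [Decidable p1] [Decidable p2] [Decidable p3] [Decidable p4]
    [Decidable p5] [Decidable p6] [Decidable p7] [Decidable p8]
    (h12 : ¬(p1 ∧ p2)) (h23 : ¬(p2 ∧ p3)) (h34 : ¬(p3 ∧ p4)) (h41 : ¬(p4 ∧ p1))
    (h56 : ¬(p5 ∧ p6)) (h67 : ¬(p6 ∧ p7)) (h78 : ¬(p7 ∧ p8)) (h85 : ¬(p8 ∧ p5))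
    (h15 : ¬(p1 ∧ p5)) (h18 : ¬(p1 ∧ p8)) (h25 : ¬(p2 ∧ p5)) (h26 : ¬(p2 ∧ p6))
    (h36 : ¬(p3 ∧ p6)) (h37 : ¬(p3 ∧ p7)) (h47 : ¬(p4 ∧ p7)) (h48 : ¬(p4 ∧ p8)) :
    (if p1 then (1:ℝ) else 0) + (if p2 then (1:ℝ) else 0) + (if p3 then (1:ℝ) else 0) +
    (if p4 then (1:ℝ) else 0) + (if p5 then (1:ℝ) else 0) + (if p6 then (1:ℝ) else 0) +
    (if p7 then (1:ℝ) else 0) + (if p8 then (1:ℝ) else 0) ≤ 2 := by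
  have hb := boolAux (decide p1) (decide p2) (decide p3) (decide p4) (decide p5) (decide p6)
    (decide p7) (decide p8) (tob _ _ h12) (tob _ _ h23) (tob _ _ h34) (tob _ _ h41)
    (tob _ _ h56) (tob _ _ h67) (tob _ _ h78) (tob _ _ h85) (tob _ _ h15) (tob _ _ h18)
    (tob _ _ h25) (tob _ _ h26) (tob _ _ h36) (tob _ _ h37) (tob _ _ h47) (tob _ _ h48)
  have key : ∀ (p : Prop) [Decidable p], (if p then (1:ℝ) else 0) = ((decide p).toNat : ℝ) := by
    intro p _; by_cases h : p <;> simp [h]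
  rw [key p1, key p2, key p3, key p4, key p5, key p6, key p7, key p8]
  exact_mod_cast hb

private lemma tm1 [DecidableEq V] {G : SimpleGraph V} {x u w : V}
    (h : G.Adj u w) (h1 : x ≠ u) (h2 : x ≠ w) :
    IsTotalMatching G {x} {s(u,w)} := by
  refine ⟨?_, ?_, ?_, ?_⟩
  · intro z hz; simp only [coe_singleton, Set.mem_singleton_iff] at hz; subst hz
    exact G.mem_edgeSet.mpr h
  · intro p hp q hq; simp only [mem_singleton] at hp hq; subst hp; subst hq; exact G.irrefl
  · intro e he f hf hef; simp only [mem_singleton] at he hf; subst he; subst hf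
    intro v _; exact hef rfl
  · intro p hp e he; simp only [mem_singleton] at hp he; subst hp; subst he
    simp [Sym2.mem_iff, h1, h2]

private lemma tm2 [DecidableEq V] {G : SimpleGraph V} {x y : V}
    (hxy : ¬ G.Adj x y) (hyx : ¬ G.Adj y x) :
    IsTotalMatching G {x, y} ∅ := by
  refine ⟨by simp, ?_, by simp, by simp⟩
  intro p hp q hq
  simp only [mem_insert, mem_singleton] at hp hq
  rcases hp with rfl | rfl <;> rcases hq with rfl | rfl <;>
    first | exact G.irrefl | assumption

private lemma tm3 [DecidableEq V] {G : SimpleGraph V} {x : V} {e1 e2 : Sym2 V}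
    (h1 : e1 ∈ G.edgeSet) (h2 : e2 ∈ G.edgeSet) (hd : ∀ v, ¬(v ∈ e1 ∧ v ∈ e2))
    (hx1 : x ∉ e1) (hx2 : x ∉ e2) :
    IsTotalMatching G {x} {e1, e2} := by
  refine ⟨?_, ?_, ?_, ?_⟩
  · intro z hz
    simp only [coe_insert, coe_singleton, Set.mem_insert_iff, Set.mem_singleton_iff] at hz
    rcases hz with rfl | rfl; exacts [h1, h2]
  · intro p hp q hq; simp only [mem_singleton] at hp hq; subst hp; subst hq; exact G.irrefl
  · intro e he f hf hef v
    simp only [mem_insert, mem_singleton] at he hf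
    rcases he with rfl | rfl <;> rcases hf with rfl | rfl
    · intro _; exact hef rfl
    · exact hd v
    · intro ⟨hv1, hv2⟩; exact hd v ⟨hv2, hv1⟩
    · intro _; exact hef rfl
  · intro p hp e he; simp only [mem_singleton, mem_insert] at hp he; subst hp
    rcases he with rfl | rfl; exacts [hx1, hx2]

private def basePts [DecidableEq V] (a b c d : V) : Fin 8 → Finset V × Finset (Sym2 V) :=
  fun k => match k with
  | 0 => ({a}, {s(b,c)})
  | 1 => ({a}, {s(c,d)})
  | 2 => ({b}, {s(c,d)})
  | 3 => ({b}, {s(d,a)})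
  | 4 => ({c}, {s(d,a)})
  | 5 => ({c}, {s(a,b)})
  | 6 => ({d}, {s(a,b)})
  | 7 => ({a,c}, ∅)

private def vertPt [DecidableEq V] (a b c d v : V) : Finset V × Finset (Sym2 V) :=
  ({v}, {s(a,b), s(c,d)})

private def edgePt [DecidableEq V] (a b c d : V) (e : Sym2 V) : Finset V × Finset (Sym2 V) :=
  (if a ∈ e then {b} else if b ∈ e then {a} else if c ∈ e then {d} else if d ∈ e then {c} else {a},
   {e, if c ∈ e ∨ d ∈ e then s(a,b) else s(c,d)})

private def famP [Fintype V] [DecidableEq V] (G : SimpleGraph V) [DecidableRel G.Adj]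
    (a b c d : V) :
    (Fin 8 ⊕ (↥((univ : Finset V) \ {a,b,c,d}) ⊕
      ↥(G.edgeFinset \ {s(a,b), s(b,c), s(c,d), s(d,a)}))) → Finset V × Finset (Sym2 V) :=
  Sum.elim (basePts a b c d)
    (Sum.elim (fun v => vertPt a b c d v.1) (fun e => edgePt a b c d e.1))

set_option maxHeartbeats 4000000 in
/-- For an induced 4-cycle on vertices `a, b, c, d` of `G`, the inequality
`x_a + x_b + x_c + x_d + y_{ab} + y_{bc} + y_{cd} + y_{da} ≤ 2` is valid for the total
matching polytope and facet-defining: there exist `n + m` affinely independent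
characteristic vectors of total matchings satisfying it with equality. -/
theorem induced_C4_inequality_facet [Fintype V] [DecidableEq V]
    (G : SimpleGraph V) [DecidableRel G.Adj] (a b c d : V)
    (hab : G.Adj a b) (hbc : G.Adj b c) (hcd : G.Adj c d) (hda : G.Adj d a)
    (hac : a ≠ c) (hbd : b ≠ d)
    (hnac : ¬ G.Adj a c) (hnbd : ¬ G.Adj b d) :
    (∀ p ∈ totalMatchingPolytope G,
      p.1 a + p.1 b + p.1 c + p.1 d +
        p.2 s(a, b) + p.2 s(b, c) + p.2 s(c, d) + p.2 s(d, a) ≤ 2) ∧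
    ∃ F : Finset (Finset V × Finset (Sym2 V)),
      F.card = Fintype.card V + G.edgeFinset.card ∧
      (∀ q ∈ F, IsTotalMatching G q.1 q.2 ∧
        (charVec q.1 q.2).1 a + (charVec q.1 q.2).1 b + (charVec q.1 q.2).1 c +
          (charVec q.1 q.2).1 d + (charVec q.1 q.2).2 s(a, b) + (charVec q.1 q.2).2 s(b, c) +
          (charVec q.1 q.2).2 s(c, d) + (charVec q.1 q.2).2 s(d, a) = 2) ∧
      AffineIndependent ℝ (fun q : F => charVec q.1.1 q.1.2) := by
  have hab' : a ≠ b := hab.ne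
  have hbc' : b ≠ c := hbc.ne
  have hcd' : c ≠ d := hcd.ne
  have hda' : d ≠ a := hda.ne
  have had : a ≠ d := hda'.symm
  have hba : b ≠ a := hab'.symm
  have hcb : c ≠ b := hbc'.symm
  have hdc : d ≠ c := hcd'.symm
  have hca : c ≠ a := hac.symm
  have hdb : d ≠ b := hbd.symm
  have nab_bc : s(a,b) ≠ s(b,c) := fun h => by
    rw [Sym2.eq_iff] at h; rcases h with ⟨h1,_⟩|⟨h1,_⟩; exacts [hab' h1, hac h1]
  have nab_cd : s(a,b) ≠ s(c,d) := fun h => by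
    rw [Sym2.eq_iff] at h; rcases h with ⟨h1,_⟩|⟨h1,_⟩; exacts [hac h1, had h1]
  have nab_da : s(a,b) ≠ s(d,a) := fun h => by
    rw [Sym2.eq_iff] at h; rcases h with ⟨h1,_⟩|⟨_,h2⟩; exacts [had h1, hbd h2]
  have nbc_cd : s(b,c) ≠ s(c,d) := fun h => by
    rw [Sym2.eq_iff] at h; rcases h with ⟨h1,_⟩|⟨h1,_⟩; exacts [hbc' h1, hbd h1]
  have nbc_da : s(b,c) ≠ s(d,a) := fun h => by
    rw [Sym2.eq_iff] at h; rcases h with ⟨h1,_⟩|⟨h1,_⟩; exacts [hbd h1, hba h1]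
  have ncd_da : s(c,d) ≠ s(d,a) := fun h => by
    rw [Sym2.eq_iff] at h; rcases h with ⟨h1,_⟩|⟨h1,_⟩; exacts [hcd' h1, hca h1]
  constructor
  · intro p hp
    have hlin : IsLinearMap ℝ (fun p : (V → ℝ) × (Sym2 V → ℝ) =>
        p.1 a + p.1 b + p.1 c + p.1 d + p.2 s(a,b) + p.2 s(b,c) + p.2 s(c,d) + p.2 s(d,a)) := by
      constructor
      · intro p q; simp only [Prod.fst_add, Prod.snd_add, Pi.add_apply]; ring
      · intro r p; simp only [Prod.smul_fst, Prod.smul_snd, Pi.smul_apply, smul_eq_mul]; ring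
    refine convexHull_min ?_ (convex_halfSpace_le hlin 2) hp
    rintro q ⟨S, M, ⟨hME, hSS, hMM, hSM⟩, rfl⟩
    have c12 : ¬(a ∈ S ∧ b ∈ S) := fun h => hSS a h.1 b h.2 hab
    have c23 : ¬(b ∈ S ∧ c ∈ S) := fun h => hSS b h.1 c h.2 hbc
    have c34 : ¬(c ∈ S ∧ d ∈ S) := fun h => hSS c h.1 d h.2 hcd
    have c41 : ¬(d ∈ S ∧ a ∈ S) := fun h => hSS d h.1 a h.2 hda
    have c56 : ¬(s(a,b) ∈ M ∧ s(b,c) ∈ M) := fun h => hMM _ h.1 _ h.2 nab_bc b ⟨by simp, by simp⟩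
    have c67 : ¬(s(b,c) ∈ M ∧ s(c,d) ∈ M) := fun h => hMM _ h.1 _ h.2 nbc_cd c ⟨by simp, by simp⟩
    have c78 : ¬(s(c,d) ∈ M ∧ s(d,a) ∈ M) := fun h => hMM _ h.1 _ h.2 ncd_da d ⟨by simp, by simp⟩
    have c85 : ¬(s(d,a) ∈ M ∧ s(a,b) ∈ M) := fun h =>
      hMM _ h.1 _ h.2 (Ne.symm nab_da) a ⟨by simp, by simp⟩
    have c15 : ¬(a ∈ S ∧ s(a,b) ∈ M) := fun h => hSM a h.1 _ h.2 (by simp)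
    have c18 : ¬(a ∈ S ∧ s(d,a) ∈ M) := fun h => hSM a h.1 _ h.2 (by simp)
    have c25 : ¬(b ∈ S ∧ s(a,b) ∈ M) := fun h => hSM b h.1 _ h.2 (by simp)
    have c26 : ¬(b ∈ S ∧ s(b,c) ∈ M) := fun h => hSM b h.1 _ h.2 (by simp)
    have c36 : ¬(c ∈ S ∧ s(b,c) ∈ M) := fun h => hSM c h.1 _ h.2 (by simp)
    have c37 : ¬(c ∈ S ∧ s(c,d) ∈ M) := fun h => hSM c h.1 _ h.2 (by simp)
    have c47 : ¬(d ∈ S ∧ s(c,d) ∈ M) := fun h => hSM d h.1 _ h.2 (by simp)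
    have c48 : ¬(d ∈ S ∧ s(d,a) ∈ M) := fun h => hSM d h.1 _ h.2 (by simp)
    show _ ≤ (2:ℝ)
    simpa [charVec] using
      iteAux _ _ _ _ _ _ _ _ c12 c23 c34 c41 c56 c67 c78 c85 c15 c18 c25 c26 c36 c37 c47 c48
  · -- facet part
    have hQcard : ({a,b,c,d} : Finset V).card = 4 := by
      rw [card_insert_of_notMem (by simp [hab', hac, had]),
          card_insert_of_notMem (by simp [hbc', hbd]),
          card_insert_of_notMem (by simp [hcd']), card_singleton]
    have hCcard : ({s(a,b), s(b,c), s(c,d), s(d,a)} : Finset (Sym2 V)).card = 4 := by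
      rw [card_insert_of_notMem (by simp [nab_bc, nab_cd, nab_da]),
          card_insert_of_notMem (by simp [nbc_cd, nbc_da]),
          card_insert_of_notMem (by simp [ncd_da]), card_singleton]
    have hCsub : ({s(a,b), s(b,c), s(c,d), s(d,a)} : Finset (Sym2 V)) ⊆ G.edgeFinset := by
      intro x hx
      simp only [mem_insert, mem_singleton] at hx
      rcases hx with rfl|rfl|rfl|rfl <;>
        simp [SimpleGraph.mem_edgeFinset, hab, hbc, hcd, hda]
    have hn4 : 4 ≤ Fintype.card V := hQcard ▸ Finset.card_le_univ _
    have hm4 : 4 ≤ G.edgeFinset.card := hCcard ▸ card_le_card hCsub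
    have hFEmem : ∀ e : Sym2 V, (if c ∈ e ∨ d ∈ e then s(a,b) else s(c,d)) ∈
        ({s(a,b), s(b,c), s(c,d), s(d,a)} : Finset (Sym2 V)) := by
      intro e; split_ifs <;> simp
    have hbase1 : ∀ (k : Fin 8) (x : V), x ∈ (basePts a b c d k).1 →
        x ∈ ({a,b,c,d} : Finset V) := by
      intro k x hx
      fin_cases k <;> simp [basePts] at hx <;> rcases hx with rfl | rfl <;> simp
    have hbase2 : ∀ (k : Fin 8) (x : Sym2 V), x ∈ (basePts a b c d k).2 →
        x ∈ ({s(a,b), s(b,c), s(c,d), s(d,a)} : Finset (Sym2 V)) := by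
      intro k x hx
      fin_cases k <;> simp [basePts] at hx <;> simp [hx]
    have hedge1 : ∀ (e : Sym2 V) (x : V), x ∈ (edgePt a b c d e).1 →
        x ∈ ({a,b,c,d} : Finset V) := by
      intro e x hx
      simp only [edgePt] at hx
      split_ifs at hx <;> simp only [mem_singleton] at hx <;> simp [hx]
    have hc2 : ({s(a,b), s(c,d)} : Finset (Sym2 V)).card = 2 := by
      rw [card_insert_of_notMem (by simp [nab_cd]), card_singleton]
    -- affine independence over the index type
    have hAI : AffineIndependent ℝ
        (fun i => charVec ((famP G a b c d) i).1 ((famP G a b c d) i).2) := by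
      rw [affineIndependent_iff]
      intro s w hs0 hsum i hi
      classical
      set w' : (Fin 8 ⊕ (↥((univ : Finset V) \ {a,b,c,d}) ⊕
          ↥(G.edgeFinset \ {s(a,b), s(b,c), s(c,d), s(d,a)}))) → ℝ :=
        fun j => if j ∈ s then w j else 0 with hw'def
      have hw0 : ∑ j, w' j = 0 := by
        rw [hw'def]; rw [Finset.sum_ite_mem, univ_inter]; exact hs0
      have hwv : ∑ j, w' j • charVec ((famP G a b c d) j).1 ((famP G a b c d) j).2 = 0 := by
        have h1 : ∀ j, w' j • charVec ((famP G a b c d) j).1 ((famP G a b c d) j).2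
            = if j ∈ s then w j • charVec ((famP G a b c d) j).1 ((famP G a b c d) j).2
              else 0 := by
          intro j; by_cases hj : j ∈ s <;> simp [hw'def, hj]
        rw [Finset.sum_congr rfl (fun j _ => h1 j), Finset.sum_ite_mem, univ_inter]
        exact hsum
      suffices hall : ∀ j, w' j = 0 by
        have := hall i
        rw [hw'def] at this
        simpa [hi] using this
      have hx : ∀ z : V,
          ∑ j, w' j * (if z ∈ ((famP G a b c d) j).1 then (1:ℝ) else 0) = 0 := by
        intro z
        have h := congrFun (congrArg Prod.fst hwv) z
        simpa [Prod.fst_sum, charVec, Finset.sum_apply, Pi.smul_apply, smul_eq_mul] using h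
      have hy : ∀ z : Sym2 V,
          ∑ j, w' j * (if z ∈ ((famP G a b c d) j).2 then (1:ℝ) else 0) = 0 := by
        intro z
        have h := congrFun (congrArg Prod.snd hwv) z
        simpa [Prod.snd_sum, charVec, Finset.sum_apply, Pi.smul_apply, smul_eq_mul] using h
      have hV0 : ∀ u : ↥((univ : Finset V) \ {a,b,c,d}), w' (Sum.inr (Sum.inl u)) = 0 := by
        intro u
        have hune : u.1 ∉ ({a,b,c,d} : Finset V) := (mem_sdiff.mp u.2).2
        have h := hx u.1
        rw [Fintype.sum_sum_type, Fintype.sum_sum_type] at h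
        rw [Finset.sum_eq_zero (f := fun k : Fin 8 =>
              w' (Sum.inl k) * (if u.1 ∈ ((famP G a b c d) (Sum.inl k)).1 then (1:ℝ) else 0))
            (fun k _ => by
              have hz : u.1 ∉ (basePts a b c d k).1 := fun hmem => hune (hbase1 k _ hmem)
              simp [famP, hz])] at h
        rw [Finset.sum_eq_zero (f := fun eE =>
              w' (Sum.inr (Sum.inr eE)) *
                (if u.1 ∈ ((famP G a b c d) (Sum.inr (Sum.inr eE))).1 then (1:ℝ) else 0))
            (fun eE _ => by
              have hz : u.1 ∉ (edgePt a b c d eE.1).1 := fun hmem => hune (hedge1 _ _ hmem)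
              simp [famP, hz])] at h
        rw [Finset.sum_eq_single_of_mem u (mem_univ u)
            (fun u' _ hu' => by
              have hz : u.1 ∉ (vertPt a b c d u'.1).1 := by
                simp only [vertPt, mem_singleton]
                exact fun hh => hu' (Subtype.ext hh.symm)
              simp [famP, hz])] at h
        simp only [famP, Sum.elim_inr, Sum.elim_inl, vertPt, mem_singleton] at h
        simpa using h
      have hE0 : ∀ u : ↥(G.edgeFinset \ {s(a,b), s(b,c), s(c,d), s(d,a)}),
          w' (Sum.inr (Sum.inr u)) = 0 := by
        intro u
        have hune : u.1 ∉ ({s(a,b), s(b,c), s(c,d), s(d,a)} : Finset (Sym2 V)) :=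
          (mem_sdiff.mp u.2).2
        have h := hy u.1
        rw [Fintype.sum_sum_type, Fintype.sum_sum_type] at h
        rw [Finset.sum_eq_zero (f := fun k : Fin 8 =>
              w' (Sum.inl k) * (if u.1 ∈ ((famP G a b c d) (Sum.inl k)).2 then (1:ℝ) else 0))
            (fun k _ => by
              have hz : u.1 ∉ (basePts a b c d k).2 := fun hmem => hune (hbase2 k _ hmem)
              simp [famP, hz])] at h
        rw [Finset.sum_eq_zero (f := fun v' =>
              w' (Sum.inr (Sum.inl v')) *
                (if u.1 ∈ ((famP G a b c d) (Sum.inr (Sum.inl v'))).2 then (1:ℝ) else 0))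
            (fun v' _ => by
              have hz : u.1 ∉ (vertPt a b c d v'.1).2 := by
                simp only [vertPt, mem_insert, mem_singleton]
                rintro (h4|h4) <;> exact hune (by simp [h4])
              simp [famP, hz])] at h
        rw [Finset.sum_eq_single_of_mem u (mem_univ u)
            (fun u' _ hu' => by
              have hz : u.1 ∉ (edgePt a b c d u'.1).2 := by
                simp only [edgePt, mem_insert, mem_singleton]
                rintro (h4|h4)
                · exact hu' (Subtype.ext h4.symm)
                · exact hune (by rw [h4]; exact hFEmem u'.1)
              simp [famP, hz])] at h
        simp only [famP, Sum.elim_inr, edgePt, mem_insert, mem_singleton] at h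
        simpa using h
      have hred : ∀ g : Finset V × Finset (Sym2 V) → ℝ,
          (∑ j, w' j * g ((famP G a b c d) j)) =
            ∑ k : Fin 8, w' (Sum.inl k) * g (basePts a b c d k) := by
        intro g
        rw [Fintype.sum_sum_type, Fintype.sum_sum_type]
        rw [Finset.sum_eq_zero (f := fun u : ↥((univ : Finset V) \ {a,b,c,d}) =>
              w' (Sum.inr (Sum.inl u)) * g ((famP G a b c d) (Sum.inr (Sum.inl u))))
            (fun u _ => by simp only [hV0 u, zero_mul]),
          Finset.sum_eq_zero (f := fun u : ↥(G.edgeFinset \ {s(a,b), s(b,c), s(c,d), s(d,a)}) =>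
              w' (Sum.inr (Sum.inr u)) * g ((famP G a b c d) (Sum.inr (Sum.inr u))))
            (fun u _ => by simp only [hE0 u, zero_mul])]
        simp [famP]
      have Ha : ∑ k : Fin 8, w' (Sum.inl k) *
          (if a ∈ (basePts a b c d k).1 then (1:ℝ) else 0) = 0 :=
        (hred (fun p => if a ∈ p.1 then (1:ℝ) else 0)).symm.trans (hx a)
      have Hb : ∑ k : Fin 8, w' (Sum.inl k) *
          (if b ∈ (basePts a b c d k).1 then (1:ℝ) else 0) = 0 :=
        (hred (fun p => if b ∈ p.1 then (1:ℝ) else 0)).symm.trans (hx b)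
      have Hc : ∑ k : Fin 8, w' (Sum.inl k) *
          (if c ∈ (basePts a b c d k).1 then (1:ℝ) else 0) = 0 :=
        (hred (fun p => if c ∈ p.1 then (1:ℝ) else 0)).symm.trans (hx c)
      have Hd : ∑ k : Fin 8, w' (Sum.inl k) *
          (if d ∈ (basePts a b c d k).1 then (1:ℝ) else 0) = 0 :=
        (hred (fun p => if d ∈ p.1 then (1:ℝ) else 0)).symm.trans (hx d)
      have Hab : ∑ k : Fin 8, w' (Sum.inl k) *
          (if s(a,b) ∈ (basePts a b c d k).2 then (1:ℝ) else 0) = 0 :=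
        (hred (fun p => if s(a,b) ∈ p.2 then (1:ℝ) else 0)).symm.trans (hy s(a,b))
      have Hbc : ∑ k : Fin 8, w' (Sum.inl k) *
          (if s(b,c) ∈ (basePts a b c d k).2 then (1:ℝ) else 0) = 0 :=
        (hred (fun p => if s(b,c) ∈ p.2 then (1:ℝ) else 0)).symm.trans (hy s(b,c))
      have Hcd : ∑ k : Fin 8, w' (Sum.inl k) *
          (if s(c,d) ∈ (basePts a b c d k).2 then (1:ℝ) else 0) = 0 :=
        (hred (fun p => if s(c,d) ∈ p.2 then (1:ℝ) else 0)).symm.trans (hy s(c,d))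
      have Hda : ∑ k : Fin 8, w' (Sum.inl k) *
          (if s(d,a) ∈ (basePts a b c d k).2 then (1:ℝ) else 0) = 0 :=
        (hred (fun p => if s(d,a) ∈ p.2 then (1:ℝ) else 0)).symm.trans (hy s(d,a))
      have Hs : ∑ k : Fin 8, w' (Sum.inl k) = 0 := by
        have h1 : ∑ j, w' j * (1:ℝ) = 0 := by simpa using hw0
        have h2 := (hred (fun _ => (1:ℝ))).symm.trans h1
        simpa using h2
      rw [Fin.sum_univ_eight] at Ha Hb Hc Hd Hab Hbc Hcd Hda Hs
      simp only [basePts, mem_singleton, mem_insert, Finset.notMem_empty, Sym2.eq_iff] at Ha Hb Hc Hd Hab Hbc Hcd Hda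
      simp only [hab', hba, hbc', hcb, hcd', hdc, hda', had, hac, hca, hbd, hdb,
        and_false, false_and, and_self, or_self, false_or, or_false, and_true, true_and,
        if_true, if_false, ite_true, ite_false, eq_self_iff_true, not_false_iff,
        mul_one, mul_zero, add_zero, zero_add] at Ha Hb Hc Hd Hab Hbc Hcd Hda
      have k0 : w' (Sum.inl (0 : Fin 8)) = 0 := by linarith
      have k1 : w' (Sum.inl (1 : Fin 8)) = 0 := by linarith
      have k2 : w' (Sum.inl (2 : Fin 8)) = 0 := by linarith
      have k3 : w' (Sum.inl (3 : Fin 8)) = 0 := by linarith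
      have k4 : w' (Sum.inl (4 : Fin 8)) = 0 := by linarith
      have k5 : w' (Sum.inl (5 : Fin 8)) = 0 := by linarith
      have k6 : w' (Sum.inl (6 : Fin 8)) = 0 := by linarith
      have k7 : w' (Sum.inl (7 : Fin 8)) = 0 := by linarith
      intro j
      rcases j with k | u | u
      · fin_cases k
        exacts [k0, k1, k2, k3, k4, k5, k6, k7]
      · exact hV0 u
      · exact hE0 u
    have hPinj : Function.Injective (famP G a b c d) := fun i j h =>
      hAI.injective (by simp only [h])
    refine ⟨Finset.image (famP G a b c d) univ, ?_, ?_, ?_⟩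
    · rw [Finset.card_image_of_injective _ hPinj, card_univ]
      simp only [Fintype.card_sum, Fintype.card_fin, Fintype.card_coe]
      rw [card_sdiff_of_subset (subset_univ _), card_sdiff_of_subset hCsub, hQcard, hCcard, card_univ]
      omega
    · -- each member is a total matching with equality
      intro q hq
      rw [Finset.mem_image] at hq
      obtain ⟨i, -, rfl⟩ := hq
      rcases i with k | v | ee
      · -- base points
        simp only [famP, Sum.elim_inl]
        fin_cases k
        · refine ⟨tm1 hbc hab' hac, ?_⟩
          simp [basePts, charVec, Sym2.eq_iff, hab', hba, hbc', hcb, hcd', hdc, hda', had,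
            hac, hca, hbd, hdb]
          norm_num
        · refine ⟨tm1 hcd hac had, ?_⟩
          simp [basePts, charVec, Sym2.eq_iff, hab', hba, hbc', hcb, hcd', hdc, hda', had,
            hac, hca, hbd, hdb]
          norm_num
        · refine ⟨tm1 hcd hbc' hbd, ?_⟩
          simp [basePts, charVec, Sym2.eq_iff, hab', hba, hbc', hcb, hcd', hdc, hda', had,
            hac, hca, hbd, hdb]
          norm_num
        · refine ⟨tm1 hda hbd hba, ?_⟩
          simp [basePts, charVec, Sym2.eq_iff, hab', hba, hbc', hcb, hcd', hdc, hda', had,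
            hac, hca, hbd, hdb]
          norm_num
        · refine ⟨tm1 hda hcd' hca, ?_⟩
          simp [basePts, charVec, Sym2.eq_iff, hab', hba, hbc', hcb, hcd', hdc, hda', had,
            hac, hca, hbd, hdb]
          norm_num
        · refine ⟨tm1 hab hca hcb, ?_⟩
          simp [basePts, charVec, Sym2.eq_iff, hab', hba, hbc', hcb, hcd', hdc, hda', had,
            hac, hca, hbd, hdb]
          norm_num
        · refine ⟨tm1 hab hda' hdb, ?_⟩
          simp [basePts, charVec, Sym2.eq_iff, hab', hba, hbc', hcb, hcd', hdc, hda', had,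
            hac, hca, hbd, hdb]
          norm_num
        · refine ⟨tm2 hnac (fun h => hnac h.symm), ?_⟩
          simp [basePts, charVec, Sym2.eq_iff, hab', hba, hbc', hcb, hcd', hdc, hda', had,
            hac, hca, hbd, hdb]
          norm_num
      · -- vertex points
        have hv := (mem_sdiff.mp v.2).2
        simp only [mem_insert, mem_singleton] at hv
        push_neg at hv
        obtain ⟨ha1, hb1, hc1, hd1⟩ := hv
        simp only [famP, Sum.elim_inr, Sum.elim_inl]
        constructor
        · refine tm3 (G.mem_edgeSet.mpr hab) (G.mem_edgeSet.mpr hcd) ?_ ?_ ?_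
          · rintro x ⟨h1, h2⟩
            rw [Sym2.mem_iff] at h1 h2
            rcases h1 with rfl|rfl <;> rcases h2 with h2|h2
            exacts [hac h2, had h2, hbc' h2, hbd h2]
          · simp [Sym2.mem_iff, ha1, hb1]
          · simp [Sym2.mem_iff, hc1, hd1]
        · simp [vertPt, charVec, Sym2.eq_iff, hab', hba, hbc', hcb, hcd', hdc, hda', had,
            hac, hca, hbd, hdb, Ne.symm ha1, Ne.symm hb1, Ne.symm hc1, Ne.symm hd1]
          norm_num
      · -- edge points
        have heS : ee.1 ∈ G.edgeSet := SimpleGraph.mem_edgeFinset.mp (mem_sdiff.mp ee.2).1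
        have hne : ee.1 ∉ ({s(a,b), s(b,c), s(c,d), s(d,a)} : Finset (Sym2 V)) :=
          (mem_sdiff.mp ee.2).2
        simp only [mem_insert, mem_singleton] at hne
        push_neg at hne
        obtain ⟨ne1, ne2, ne3, ne4⟩ := hne
        have nAB : ¬(a ∈ ee.1 ∧ b ∈ ee.1) := fun h => ne1 ((Sym2.mem_and_mem_iff hab').mp h)
        have nAC : ¬(a ∈ ee.1 ∧ c ∈ ee.1) := fun h =>
          hnac (G.mem_edgeSet.mp (((Sym2.mem_and_mem_iff hac).mp h) ▸ heS))
        have nAD : ¬(a ∈ ee.1 ∧ d ∈ ee.1) := fun h =>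
          ne4 (by rw [(Sym2.mem_and_mem_iff had).mp h, Sym2.eq_swap])
        have nBC : ¬(b ∈ ee.1 ∧ c ∈ ee.1) := fun h => ne2 ((Sym2.mem_and_mem_iff hbc').mp h)
        have nBD : ¬(b ∈ ee.1 ∧ d ∈ ee.1) := fun h =>
          hnbd (G.mem_edgeSet.mp (((Sym2.mem_and_mem_iff hbd).mp h) ▸ heS))
        have nCD : ¬(c ∈ ee.1 ∧ d ∈ ee.1) := fun h => ne3 ((Sym2.mem_and_mem_iff hcd').mp h)
        simp only [famP, Sum.elim_inr, edgePt]
        by_cases hA : a ∈ ee.1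
        · have hB : b ∉ ee.1 := fun h => nAB ⟨hA, h⟩
          have hC : c ∉ ee.1 := fun h => nAC ⟨hA, h⟩
          have hD : d ∉ ee.1 := fun h => nAD ⟨hA, h⟩
          rw [if_pos hA, if_neg (by rintro (h|h); exacts [hC h, hD h])]
          constructor
          · refine tm3 heS (G.mem_edgeSet.mpr hcd) ?_ hB ?_
            · rintro x ⟨h1, h2⟩
              rw [Sym2.mem_iff] at h2
              rcases h2 with rfl|rfl; exacts [hC h1, hD h1]
            · simp [Sym2.mem_iff, hbc', hbd]
          · simp [charVec, Sym2.eq_iff, hab', hba, hbc', hcb, hcd', hdc, hda', had,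
              hac, hca, hbd, hdb, Ne.symm ne1, Ne.symm ne2, Ne.symm ne3, Ne.symm ne4]
            norm_num
        · by_cases hB : b ∈ ee.1
          · have hC : c ∉ ee.1 := fun h => nBC ⟨hB, h⟩
            have hD : d ∉ ee.1 := fun h => nBD ⟨hB, h⟩
            rw [if_neg hA, if_pos hB, if_neg (by rintro (h|h); exacts [hC h, hD h])]
            constructor
            · refine tm3 heS (G.mem_edgeSet.mpr hcd) ?_ hA ?_
              · rintro x ⟨h1, h2⟩
                rw [Sym2.mem_iff] at h2
                rcases h2 with rfl|rfl; exacts [hC h1, hD h1]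
              · simp [Sym2.mem_iff, hac, had]
            · simp [charVec, Sym2.eq_iff, hab', hba, hbc', hcb, hcd', hdc, hda', had,
                hac, hca, hbd, hdb, Ne.symm ne1, Ne.symm ne2, Ne.symm ne3, Ne.symm ne4]
              norm_num
          · by_cases hC : c ∈ ee.1
            · have hD : d ∉ ee.1 := fun h => nCD ⟨hC, h⟩
              rw [if_neg hA, if_neg hB, if_pos hC, if_pos (Or.inl hC)]
              constructor
              · refine tm3 heS (G.mem_edgeSet.mpr hab) ?_ hD ?_
                · rintro x ⟨h1, h2⟩
                  rw [Sym2.mem_iff] at h2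
                  rcases h2 with rfl|rfl; exacts [hA h1, hB h1]
                · simp [Sym2.mem_iff, hda', hdb]
              · simp [charVec, Sym2.eq_iff, hab', hba, hbc', hcb, hcd', hdc, hda', had,
                  hac, hca, hbd, hdb, Ne.symm ne1, Ne.symm ne2, Ne.symm ne3, Ne.symm ne4]
                norm_num
            · by_cases hD : d ∈ ee.1
              · rw [if_neg hA, if_neg hB, if_neg hC, if_pos hD, if_pos (Or.inr hD)]
                constructor
                · refine tm3 heS (G.mem_edgeSet.mpr hab) ?_ hC ?_
                  · rintro x ⟨h1, h2⟩
                    rw [Sym2.mem_iff] at h2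
                    rcases h2 with rfl|rfl; exacts [hA h1, hB h1]
                  · simp [Sym2.mem_iff, hca, hcb]
                · simp [charVec, Sym2.eq_iff, hab', hba, hbc', hcb, hcd', hdc, hda', had,
                    hac, hca, hbd, hdb, Ne.symm ne1, Ne.symm ne2, Ne.symm ne3, Ne.symm ne4]
                  norm_num
              · rw [if_neg hA, if_neg hB, if_neg hC, if_neg hD,
                  if_neg (by rintro (h|h); exacts [hC h, hD h])]
                constructor
                · refine tm3 heS (G.mem_edgeSet.mpr hcd) ?_ hA ?_
                  · rintro x ⟨h1, h2⟩
                    rw [Sym2.mem_iff] at h2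
                    rcases h2 with rfl|rfl; exacts [hC h1, hD h1]
                  · simp [Sym2.mem_iff, hac, had]
                · simp [charVec, Sym2.eq_iff, hab', hba, hbc', hcb, hcd', hdc, hda', had,
                    hac, hca, hbd, hdb, Ne.symm ne1, Ne.symm ne2, Ne.symm ne3, Ne.symm ne4]
                  norm_num
    · -- affine independence, transferred
      have hinj2 : Function.Injective (fun i =>
          (⟨(famP G a b c d) i, Finset.mem_image_of_mem _ (mem_univ i)⟩ :
            ↥(Finset.image (famP G a b c d) univ))) := by
        intro i j h
        exact hPinj (Subtype.ext_iff.mp h)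
      have hsurj : Function.Surjective (fun i =>
          (⟨(famP G a b c d) i, Finset.mem_image_of_mem _ (mem_univ i)⟩ :
            ↥(Finset.image (famP G a b c d) univ))) := by
        rintro ⟨q, hq⟩
        rw [Finset.mem_image] at hq
        obtain ⟨i, -, rfl⟩ := hq
        exact ⟨i, rfl⟩
      exact (affineIndependent_equiv (Equiv.ofBijective _ ⟨hinj2, hsurj⟩)).mp hAI
end

section
/- Let G=(V,E) be a finite simple graph and let Q ⊆ V be a clique of G with |Q| = h (Q induces a complete subgraph K_h). Then every total matching T of G contains at most ⌈h/2⌉ elements among the vertices of Q and the edges with both endpoints in Q; equivalently, the clique inequality ∑_{v∈V(K_h)} x_v + ∑_{e∈E(K_h)} y_e ≤ ⌈h/2⌉ is valid for the Total Matching Polytope P_T(G). -/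
open Finset

variable {V : Type*}

/-- For a clique `Q` of `G` of cardinality `h`, every total matching contains at most
`⌈h/2⌉` elements among the vertices of `Q` and the edges with both endpoints in `Q`;
equivalently, the clique inequality `∑_{v ∈ V(K_h)} x_v + ∑_{e ∈ E(K_h)} y_e ≤ ⌈h/2⌉`
is valid for the total matching polytope. (Note `⌈h/2⌉ = (h+1)/2` in `ℕ`.) -/
theorem clique_inequality_valid [Fintype V] [DecidableEq V]
    (G : SimpleGraph V) [DecidableRel G.Adj] (Q : Finset V) (h : ℕ)
    (hQ : G.IsClique ↑Q) (hcard : Q.card = h) :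
    (∀ (S : Finset V) (M : Finset (Sym2 V)), IsTotalMatching G S M →
      (S ∩ Q).card + (M.filter fun e => ∀ v ∈ e, v ∈ Q).card ≤ (h + 1) / 2) ∧
    (∀ p ∈ totalMatchingPolytope G,
      ∑ v ∈ Q, p.1 v + ∑ e ∈ G.edgeFinset.filter (fun e => ∀ v ∈ e, v ∈ Q), p.2 e
        ≤ (((h + 1) / 2 : ℕ) : ℝ)) := by

  have key : ∀ (S : Finset V) (M : Finset (Sym2 V)), IsTotalMatching G S M →
      (S ∩ Q).card + (M.filter fun e => ∀ v ∈ e, v ∈ Q).card ≤ (h + 1) / 2 := by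
    intro S M hTM
    obtain ⟨hM, hSS, hMM, hSM⟩ := hTM
    set T := S ∩ Q with hTdef
    set F := M.filter (fun e => ∀ v ∈ e, v ∈ Q) with hFdef
    have hT1 : T.card ≤ 1 := by
      by_contra hc
      push_neg at hc
      obtain ⟨a, ha, b, hb, hab⟩ := Finset.one_lt_card.mp hc
      exact hSS a (Finset.mem_of_mem_inter_left ha) b (Finset.mem_of_mem_inter_left hb)
        (hQ (Finset.mem_of_mem_inter_right ha) (Finset.mem_of_mem_inter_right hb) hab)
    have hFmem : ∀ e ∈ F, e ∈ M ∧ ∀ v ∈ e, v ∈ Q := by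
      intro e he
      exact Finset.mem_filter.mp he
    have hbi : ∀ e ∈ F, (Q.filter (· ∈ e)).card = 2 := by
      intro e he
      obtain ⟨heM, heQ⟩ := hFmem e he
      have hedge : e ∈ G.edgeSet := hM heM
      induction e with
      | _ a b =>
        have hab : a ≠ b := fun hEq => (G.not_isDiag_of_mem_edgeSet hedge) (by simp [hEq])
        have : Q.filter (· ∈ s(a, b)) = {a, b} := by
          ext v
          simp only [Finset.mem_filter, Sym2.mem_iff, Finset.mem_insert, Finset.mem_singleton]
          constructor
          · rintro ⟨-, hv⟩; exact hv
          · rintro (rfl | rfl)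
            · exact ⟨heQ v (by simp), Or.inl rfl⟩
            · exact ⟨heQ v (by simp), Or.inr rfl⟩
        rw [this, Finset.card_insert_of_notMem (by simpa using hab), Finset.card_singleton]
    have hpw : ∀ e ∈ F, ∀ f ∈ F, e ≠ f →
        Disjoint (Q.filter (· ∈ e)) (Q.filter (· ∈ f)) := by
      intro e he f hf hef
      rw [Finset.disjoint_left]
      intro v hv hv'
      exact hMM e (hFmem e he).1 f (hFmem f hf).1 hef v
        ⟨(Finset.mem_filter.mp hv).2, (Finset.mem_filter.mp hv').2⟩
    have hcardbi : (F.biUnion (fun e => Q.filter (· ∈ e))).card = 2 * F.card := by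
      rw [Finset.card_biUnion hpw]
      rw [Finset.sum_congr rfl hbi]
      simp [mul_comm]
    have hdisj : Disjoint T (F.biUnion (fun e => Q.filter (· ∈ e))) := by
      rw [Finset.disjoint_left]
      intro v hv hv'
      obtain ⟨e, he, hve⟩ := Finset.mem_biUnion.mp hv'
      exact hSM v (Finset.mem_of_mem_inter_left hv) e (hFmem e he).1
        (Finset.mem_filter.mp hve).2
    have hsub : T ∪ F.biUnion (fun e => Q.filter (· ∈ e)) ⊆ Q := by
      intro v hv
      rcases Finset.mem_union.mp hv with hv | hv
      · exact Finset.mem_of_mem_inter_right hv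
      · obtain ⟨e, he, hve⟩ := Finset.mem_biUnion.mp hv
        exact (Finset.mem_filter.mp hve).1
    have hbound : T.card + 2 * F.card ≤ h := by
      calc T.card + 2 * F.card
          = (T ∪ F.biUnion (fun e => Q.filter (· ∈ e))).card := by
            rw [Finset.card_union_of_disjoint hdisj, hcardbi]
        _ ≤ Q.card := Finset.card_le_card hsub
        _ = h := hcard
    omega
  refine ⟨key, ?_⟩
  intro p hp
  set P : (V → ℝ) × (Sym2 V → ℝ) → ℝ :=
    fun p => ∑ v ∈ Q, p.1 v + ∑ e ∈ G.edgeFinset.filter (fun e => ∀ v ∈ e, v ∈ Q), p.2 e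
    with hPdef
  have hlin : IsLinearMap ℝ P := by
    constructor
    · intro q r
      simp only [hPdef, Prod.fst_add, Prod.snd_add, Pi.add_apply, Finset.sum_add_distrib]
      ring
    · intro c q
      simp only [hPdef, Prod.smul_fst, Prod.smul_snd, Pi.smul_apply, smul_eq_mul,
        Finset.mul_sum, mul_add]
  have hconv : Convex ℝ {q | P q ≤ (((h + 1) / 2 : ℕ) : ℝ)} :=
    convex_halfSpace_le hlin _
  have hbase : {p | ∃ S M, IsTotalMatching G S M ∧ p = charVec S M} ⊆
      {q | P q ≤ (((h + 1) / 2 : ℕ) : ℝ)} := by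
    rintro q ⟨S, M, hTM, rfl⟩
    have hv : ∑ v ∈ Q, (if v ∈ S then (1 : ℝ) else 0) = ((S ∩ Q).card : ℝ) := by
      rw [Finset.sum_boole]
      congr 1
      rw [Finset.filter_mem_eq_inter, Finset.inter_comm]
    have hMsub : M ⊆ G.edgeFinset := by
      intro e he
      rw [SimpleGraph.mem_edgeFinset]
      exact hTM.1 he
    have he : ∑ e ∈ G.edgeFinset.filter (fun e => ∀ v ∈ e, v ∈ Q),
        (if e ∈ M then (1 : ℝ) else 0)
        = ((M.filter fun e => ∀ v ∈ e, v ∈ Q).card : ℝ) := by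
      rw [Finset.sum_boole]
      congr 1
      rw [Finset.filter_filter]
      congr 1
      ext e
      simp only [Finset.mem_filter, SimpleGraph.mem_edgeFinset]
      exact ⟨fun hh => ⟨hh.2.2, hh.2.1⟩, fun hh => ⟨hTM.1 hh.1, hh.2, hh.1⟩⟩
    show P (charVec S M) ≤ _
    simp only [hPdef, charVec]
    rw [hv, he]
    have := key S M hTM
    exact_mod_cast Nat.cast_le.mpr this
  exact convexHull_min hbase hconv hp
end

section
/- Let h ≥ 2 be an even integer and let K_h be the complete graph on h vertices, so n+m = h + h(h−1)/2. Then the even-clique inequality ∑_{v∈V(K_h)} x_v + ∑_{e∈E(K_h)} y_e ≤ h/2 is valid for the Total Matching Polytope P_T(K_h) (every total matching of K_h has cardinality at most h/2), and it is facet-defining: there exist n+m affinely independent characteristic vectors of total matchings of K_h of cardinality exactly h/2. -/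
open Finset

variable {V : Type*}

namespace EvenCliqueAux

open SimpleGraph

/-- unit vertex vector -/
def ex (k : ℕ) (v : Fin (k + k)) : (Fin (k + k) → ℝ) × (Sym2 (Fin (k + k)) → ℝ) :=
  (Pi.single v 1, 0)

/-- unit edge vector -/
def ey (k : ℕ) (f : Sym2 (Fin (k + k))) : (Fin (k + k) → ℝ) × (Sym2 (Fin (k + k)) → ℝ) :=
  (0, Pi.single f 1)

lemma charVec_eq (k : ℕ) (S : Finset (Fin (k + k))) (M : Finset (Sym2 (Fin (k + k)))) :
    charVec S M = ∑ v ∈ S, ex k v + ∑ f ∈ M, ey k f := by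
  have h1 : (∑ v ∈ S, ex k v + ∑ f ∈ M, ey k f).1 = ∑ v ∈ S, Pi.single v (1:ℝ) := by
    simp [ex, ey, Prod.fst_sum]
  have h2 : (∑ v ∈ S, ex k v + ∑ f ∈ M, ey k f).2 = ∑ f ∈ M, Pi.single f (1:ℝ) := by
    simp [ex, ey, Prod.snd_sum]
  refine Prod.ext ?_ ?_
  · rw [h1]; funext w
    simp [charVec, Finset.sum_apply, Pi.single_apply, Finset.sum_ite_eq]
  · rw [h2]; funext g
    simp [charVec, Finset.sum_apply, Pi.single_apply, Finset.sum_ite_eq]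

/-- matching edges induced by `μ` on index set `s ⊆ range k`. -/
def medges (k : ℕ) (μ : ℕ → Fin (k + k)) (s : Finset ℕ) : Finset (Sym2 (Fin (k + k))) :=
  s.image fun i => s(μ (2 * i), μ (2 * i + 1))

lemma mem_Iio' {a b : ℕ} (h : a < b) : a ∈ Set.Iio b := Set.mem_Iio.2 h

lemma medges_injOn (k : ℕ) (μ : ℕ → Fin (k + k)) (hμ : Set.InjOn μ (Set.Iio (k + k)))
    (s : Finset ℕ) (hs : s ⊆ Finset.range k) :
    Set.InjOn (fun i => s(μ (2 * i), μ (2 * i + 1))) s := by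
  intro i hi j hj hij
  have hi' : i < k := Finset.mem_range.1 (hs hi)
  have hj' : j < k := Finset.mem_range.1 (hs hj)
  simp only [Sym2.eq, Sym2.rel_iff', Prod.mk.injEq, Prod.swap_prod_mk] at hij
  rcases hij with ⟨h1, _⟩ | ⟨h1, h2⟩
  · have := hμ (mem_Iio' (by omega)) (mem_Iio' (by omega)) h1
    omega
  · have := hμ (mem_Iio' (show 2 * i < k + k by omega))
      (mem_Iio' (show 2 * j + 1 < k + k by omega)) h1
    omega

lemma medges_card (k : ℕ) (μ : ℕ → Fin (k + k)) (hμ : Set.InjOn μ (Set.Iio (k + k)))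
    (s : Finset ℕ) (hs : s ⊆ Finset.range k) : (medges k μ s).card = s.card :=
  Finset.card_image_of_injOn (medges_injOn k μ hμ s hs)

lemma mem_medges_vertex (k : ℕ) (μ : ℕ → Fin (k + k)) (s : Finset ℕ)
    {e : Sym2 (Fin (k + k))} (he : e ∈ medges k μ s) {v : Fin (k + k)} (hv : v ∈ e) :
    ∃ i ∈ s, e = s(μ (2 * i), μ (2 * i + 1)) ∧ (v = μ (2 * i) ∨ v = μ (2 * i + 1)) := by
  obtain ⟨i, hi, rfl⟩ := Finset.mem_image.1 he
  rw [Sym2.mem_iff] at hv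
  exact ⟨i, hi, rfl, hv⟩

lemma medges_isTotalMatching (k : ℕ) (μ : ℕ → Fin (k + k))
    (hμ : Set.InjOn μ (Set.Iio (k + k))) (s : Finset ℕ) (hs : s ⊆ Finset.range k)
    (S : Finset (Fin (k + k))) (hS : ∀ v ∈ S, ∀ w ∈ S, v = w)
    (hSM : ∀ v ∈ S, ∀ i ∈ s, v ≠ μ (2 * i) ∧ v ≠ μ (2 * i + 1)) :
    IsTotalMatching (⊤ : SimpleGraph (Fin (k + k))) S (medges k μ s) := by
  have key : ∀ {a b : ℕ}, μ a = μ b → a < k + k → b < k + k → a = b := fun h ha hb =>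
    hμ (mem_Iio' ha) (mem_Iio' hb) h
  have hne : ∀ i ∈ s, μ (2 * i) ≠ μ (2 * i + 1) := by
    intro i hi h
    have hi' : i < k := Finset.mem_range.1 (hs hi)
    have := key h (by omega) (by omega)
    omega
  refine ⟨?_, ?_, ?_, ?_⟩
  · intro e he
    obtain ⟨i, hi, rfl⟩ := Finset.mem_image.1 he
    rw [SimpleGraph.mem_edgeSet, SimpleGraph.top_adj]
    exact hne i hi
  · intro v hv w hw hadj
    exact (SimpleGraph.top_adj v w).1 hadj (hS v hv w hw)
  · intro e he f hf hef v hvef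
    obtain ⟨hve, hvf⟩ := hvef
    obtain ⟨i, hi, hei, hie⟩ := mem_medges_vertex k μ s he hve
    obtain ⟨j, hj, hfj, hjf⟩ := mem_medges_vertex k μ s hf hvf
    have hi' : i < k := Finset.mem_range.1 (hs hi)
    have hj' : j < k := Finset.mem_range.1 (hs hj)
    have hij : i = j := by
      rcases hie with h1 | h1 <;> rcases hjf with h2 | h2 <;>
      · have := key (h1.symm.trans h2) (by omega) (by omega)
        omega
    exact hef (hei.trans (hij ▸ hfj.symm))
  · intro v hv e he hve
    obtain ⟨i, hi, _, hie⟩ := mem_medges_vertex k μ s he hve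
    rcases hie with h1 | h1
    · exact (hSM _ hv i hi).1 h1
    · exact (hSM _ hv i hi).2 h1


def mu0 (k : ℕ) (hk : 0 < k) : ℕ → Fin (k + k) :=
  fun n => ⟨n % (k + k), Nat.mod_lt _ (by omega)⟩

lemma mu0_injOn (k : ℕ) (hk : 0 < k) : Set.InjOn (mu0 k hk) (Set.Iio (k + k)) := by
  intro n hn m hm h
  have := congrArg Fin.val h
  simp only [mu0] at this
  rw [Nat.mod_eq_of_lt hn, Nat.mod_eq_of_lt hm] at this
  exact this

lemma mu0_val (k : ℕ) (hk : 0 < k) {n : ℕ} (hn : n < k + k) : (mu0 k hk n : ℕ) = n := by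
  simp only [mu0]
  exact Nat.mod_eq_of_lt hn

lemma exists_perm {α : Type*} [DecidableEq α] {a b u v : α} (hab : a ≠ b) (huv : u ≠ v) :
    ∃ σ : Equiv.Perm α, σ a = u ∧ σ b = v := by
  set σ1 := Equiv.swap a u with hσ1
  have hb' : σ1 v ≠ a := by
    intro hc
    have := congrArg σ1 hc
    rw [Equiv.swap_apply_self, Equiv.swap_apply_left] at this
    exact huv this.symm
  refine ⟨(Equiv.swap b (σ1 v)).trans σ1, ?_, ?_⟩
  · rw [Equiv.trans_apply, Equiv.swap_apply_of_ne_of_ne hab (Ne.symm hb'),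
      Equiv.swap_apply_left]
  · rw [Equiv.trans_apply, Equiv.swap_apply_left, Equiv.swap_apply_self]

/-- The set of characteristic vectors of total matchings of cardinality `k`. -/
def T (k : ℕ) : Set ((Fin (k + k) → ℝ) × (Sym2 (Fin (k + k)) → ℝ)) :=
  {p | ∃ S M, IsTotalMatching (⊤ : SimpleGraph (Fin (k + k))) S M ∧
    2 * (S.card + M.card) = k + k ∧ p = charVec S M}

lemma sum_medges (k : ℕ) (μ : ℕ → Fin (k + k)) (hμ : Set.InjOn μ (Set.Iio (k + k)))
    (s : Finset ℕ) (hs : s ⊆ Finset.range k) :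
    ∑ f ∈ medges k μ s, ey k f = ∑ i ∈ s, ey k s(μ (2 * i), μ (2 * i + 1)) :=
  Finset.sum_image fun i hi j hj h => medges_injOn k μ hμ s hs hi hj h

lemma key_points (k : ℕ) (hk : 0 < k) {u v : Fin (k + k)} (huv : u ≠ v) :
    (ex k u - ex k v ∈ Submodule.span ℝ (T k)) ∧
    (ex k u - ey k s(u, v) ∈ Submodule.span ℝ (T k)) := by
  classical
  have hab : mu0 k hk 0 ≠ mu0 k hk 1 := by
    intro h
    have := congrArg Fin.val h
    rw [mu0_val k hk (by omega), mu0_val k hk (by omega)] at this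
    exact absurd this (by omega)
  obtain ⟨σ, hσa, hσb⟩ := exists_perm hab huv
  set μ : ℕ → Fin (k + k) := fun n => σ (mu0 k hk n) with hμdef
  have hμ : Set.InjOn μ (Set.Iio (k + k)) := fun n hn m hm h =>
    mu0_injOn k hk hn hm (σ.injective h)
  have hμ0 : μ 0 = u := hσa
  have hμ1 : μ 1 = v := hσb
  set s' : Finset ℕ := (Finset.range k).erase 0 with hs'def
  have hs' : s' ⊆ Finset.range k := Finset.erase_subset _ _
  have hrange : (Finset.range k : Finset ℕ) ⊆ Finset.range k := subset_rfl
  have key : ∀ {a b : ℕ}, μ a = μ b → a < k + k → b < k + k → a = b := fun h ha hb =>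
    hμ (mem_Iio' ha) (mem_Iio' hb) h
  -- vertex avoidance for u and v
  have havoid : ∀ w : Fin (k + k), ∀ n < 2, w = μ n →
      ∀ i ∈ s', w ≠ μ (2 * i) ∧ w ≠ μ (2 * i + 1) := by
    intro w n hn hw i hi
    have hi0 : i ≠ 0 := Finset.ne_of_mem_erase hi
    have hik : i < k := Finset.mem_range.1 (hs' hi)
    constructor
    · intro h
      have := key (hw ▸ h) (by omega) (by omega)
      omega
    · intro h
      have := key (hw ▸ h) (by omega) (by omega)
      omega
  have hMcard : (medges k μ s').card = k - 1 := by
    rw [medges_card k μ hμ s' hs', hs'def, Finset.card_erase_of_mem (by simp [hk]),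
      Finset.card_range]
  -- membership of the three points in T k
  have hA : charVec {u} (medges k μ s') ∈ T k := by
    refine ⟨{u}, medges k μ s', ?_, ?_, rfl⟩
    · exact medges_isTotalMatching k μ hμ s' hs' {u} (by simp)
        (by intro w hw; rw [Finset.mem_singleton] at hw; subst hw
            exact havoid w 0 (by omega) hμ0.symm)
    · rw [hMcard]; simp; omega
  have hB : charVec {v} (medges k μ s') ∈ T k := by
    refine ⟨{v}, medges k μ s', ?_, ?_, rfl⟩
    · exact medges_isTotalMatching k μ hμ s' hs' {v} (by simp)
        (by intro w hw; rw [Finset.mem_singleton] at hw; subst hw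
            exact havoid w 1 (by omega) hμ1.symm)
    · rw [hMcard]; simp; omega
  have hC : charVec (∅ : Finset (Fin (k + k))) (medges k μ (Finset.range k)) ∈ T k := by
    refine ⟨∅, medges k μ (Finset.range k), ?_, ?_, rfl⟩
    · exact medges_isTotalMatching k μ hμ _ hrange ∅ (by simp) (by simp)
    · rw [medges_card k μ hμ _ hrange, Finset.card_range]; simp; omega
  have hsum' : ∑ i ∈ Finset.range k, ey k s(μ (2 * i), μ (2 * i + 1)) =
      ey k s(u, v) + ∑ i ∈ s', ey k s(μ (2 * i), μ (2 * i + 1)) := by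
    rw [hs'def, ← Finset.add_sum_erase _ _ (Finset.mem_range.2 hk)]
    norm_num [hμ0, hμ1]
  constructor
  · have h1 := (Submodule.span ℝ (T k)).sub_mem (Submodule.subset_span hA) (Submodule.subset_span hB)
    have he : charVec {u} (medges k μ s') - charVec {v} (medges k μ s')
        = ex k u - ex k v := by
      rw [charVec_eq, charVec_eq, Finset.sum_singleton, Finset.sum_singleton]
      abel
    rwa [he] at h1
  · have h1 := (Submodule.span ℝ (T k)).sub_mem (Submodule.subset_span hA) (Submodule.subset_span hC)
    have he : charVec {u} (medges k μ s') - charVec ∅ (medges k μ (Finset.range k))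
        = ex k u - ey k s(u, v) := by
      rw [charVec_eq, charVec_eq, Finset.sum_singleton, Finset.sum_empty,
        sum_medges k μ hμ s' hs', sum_medges k μ hμ _ hrange, hsum']
      abel
    rwa [he] at h1


lemma diff3_mem (k : ℕ) (hk : 0 < k) {a b : Fin (k + k)} (hab : a ≠ b) (w : Fin (k + k)) :
    ey k s(a, b) - ex k w ∈ Submodule.span ℝ (T k) := by
  by_cases hwa : w = a
  · subst hwa
    have := Submodule.neg_mem _ (key_points k hk hab).2
    rwa [neg_sub] at this
  · have h1 := (key_points k hk (fun h : a = w => hwa h.symm)).1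
    have h2 := (key_points k hk hab).2
    have := Submodule.sub_mem _ h1 h2
    rwa [show ex k a - ex k w - (ex k a - ey k s(a, b)) = ey k s(a, b) - ex k w by abel]
      at this

lemma ex_mem (k : ℕ) (hk : 0 < k) (w : Fin (k + k)) : ex k w ∈ Submodule.span ℝ (T k) := by
  classical
  set μ := mu0 k hk with hμdef
  have hμ : Set.InjOn μ (Set.Iio (k + k)) := mu0_injOn k hk
  have hrange : (Finset.range k : Finset ℕ) ⊆ Finset.range k := subset_rfl
  have hP0 : charVec (∅ : Finset (Fin (k + k))) (medges k μ (Finset.range k)) ∈ T k := by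
    refine ⟨∅, medges k μ (Finset.range k), ?_, ?_, rfl⟩
    · exact medges_isTotalMatching k μ hμ _ hrange ∅ (by simp) (by simp)
    · rw [medges_card k μ hμ _ hrange, Finset.card_range]; simp; omega
  have hne : ∀ i ∈ Finset.range k, μ (2 * i) ≠ μ (2 * i + 1) := by
    intro i hi h
    have hik : i < k := Finset.mem_range.1 hi
    have := hμ (mem_Iio' (show 2 * i < k + k by omega))
      (mem_Iio' (show 2 * i + 1 < k + k by omega)) h
    omega
  have hsum : charVec (∅ : Finset (Fin (k + k))) (medges k μ (Finset.range k)) =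
      ∑ i ∈ Finset.range k, ey k s(μ (2 * i), μ (2 * i + 1)) := by
    rw [charVec_eq, Finset.sum_empty, sum_medges k μ hμ _ hrange, zero_add]
  have hdiffs : ∑ i ∈ Finset.range k,
      (ey k s(μ (2 * i), μ (2 * i + 1)) - ex k w) ∈ Submodule.span ℝ (T k) :=
    Submodule.sum_mem _ fun i hi => diff3_mem k hk (hne i hi) w
  have hsmul : (k : ℝ) • ex k w =
      charVec (∅ : Finset (Fin (k + k))) (medges k μ (Finset.range k)) -
      ∑ i ∈ Finset.range k, (ey k s(μ (2 * i), μ (2 * i + 1)) - ex k w) := by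
    rw [hsum, Finset.sum_sub_distrib, Finset.sum_const, Finset.card_range,
      ← Nat.cast_smul_eq_nsmul ℝ k (ex k w)]
    abel
  have hmem : (k : ℝ) • ex k w ∈ Submodule.span ℝ (T k) := by
    rw [hsmul]
    exact Submodule.sub_mem _ (Submodule.subset_span hP0) hdiffs
  have hk' : (k : ℝ) ≠ 0 := by positivity
  have := Submodule.smul_mem _ (k : ℝ)⁻¹ hmem
  rwa [inv_smul_smul₀ hk'] at this

lemma ey_mem (k : ℕ) (hk : 0 < k) {f : Sym2 (Fin (k + k))} (hf : ¬ f.IsDiag) :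
    ey k f ∈ Submodule.span ℝ (T k) := by
  induction f with
  | _ a b =>
    have hab : a ≠ b := by
      intro h
      exact hf (by rw [h]; exact Sym2.mk_isDiag_iff.2 rfl)
    have h1 := ex_mem k hk a
    have h2 := (key_points k hk hab).2
    have := Submodule.sub_mem _ h1 h2
    rwa [show ex k a - (ex k a - ey k s(a, b)) = ey k s(a, b) by abel] at this


/-- The edge set of the complete graph as a finset. -/
def Egf (k : ℕ) : Finset (Sym2 (Fin (k + k))) := (⊤ : SimpleGraph (Fin (k + k))).edgeFinset

def gfam (k : ℕ) : (Fin (k + k)) ⊕ {f // f ∈ Egf k} →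
    (Fin (k + k) → ℝ) × (Sym2 (Fin (k + k)) → ℝ) :=
  Sum.elim (ex k) (fun f => ey k f.1)

lemma gfam_li (k : ℕ) : LinearIndependent ℝ (gfam k) := by
  rw [Fintype.linearIndependent_iff]
  intro c hc
  have h1 := congrArg Prod.fst hc
  have h2 := congrArg Prod.snd hc
  rw [Prod.fst_sum] at h1
  rw [Prod.snd_sum] at h2
  have key1 : ∀ u : Fin (k + k), c (Sum.inl u) = 0 := by
    intro u
    have := congrFun h1 u
    simpa [Fintype.sum_sum_type, gfam, ex, ey, Finset.sum_apply, Pi.single_apply,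
      mul_ite, Finset.sum_ite_eq] using this
  have key2 : ∀ f : {f // f ∈ Egf k}, c (Sum.inr f) = 0 := by
    intro f
    have := congrFun h2 f.1
    simp only [Fintype.sum_sum_type, gfam, ex, ey, Finset.sum_apply, Sum.elim_inl,
      Sum.elim_inr, Prod.smul_fst, Prod.smul_snd, smul_zero, Prod.fst_zero, Prod.snd_zero,
      Pi.add_apply, Pi.zero_apply, Pi.smul_apply, smul_eq_mul, mul_zero,
      Finset.sum_const_zero, zero_add, Pi.single_apply, mul_ite, mul_one] at this
    rw [Finset.sum_eq_single f] at this
    · simpa using this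
    · intro b _ hb
      rw [if_neg]
      intro h
      exact hb (Subtype.ext h.symm)
    · intro h
      exact absurd (Finset.mem_univ f) h
  intro i
  cases i with
  | inl u => exact key1 u
  | inr f => exact key2 f

lemma span_gfam_eq (k : ℕ) (hk : 0 < k) :
    Submodule.span ℝ (Set.range (gfam k)) = Submodule.span ℝ (T k) := by
  apply le_antisymm
  · rw [Submodule.span_le]
    rintro p ⟨i, rfl⟩
    cases i with
    | inl u => exact ex_mem k hk u
    | inr f =>
      refine ey_mem k hk ?_
      have := f.2
      simp only [Egf, SimpleGraph.mem_edgeFinset, SimpleGraph.edgeSet_top] at this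
      exact this
  · rw [Submodule.span_le]
    rintro p ⟨S, M, htm, hcard, rfl⟩
    rw [SetLike.mem_coe, charVec_eq]
    refine Submodule.add_mem _ (Submodule.sum_mem _ fun v _ => ?_)
      (Submodule.sum_mem _ fun f hf => ?_)
    · exact Submodule.subset_span ⟨Sum.inl v, rfl⟩
    · refine Submodule.subset_span ⟨Sum.inr ⟨f, ?_⟩, rfl⟩
      exact SimpleGraph.mem_edgeFinset.2 (htm.1 hf)

lemma finrank_span_T (k : ℕ) (hk : 0 < k) :
    Module.finrank ℝ (Submodule.span ℝ (T k)) = (k + k) + (Egf k).card := by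
  rw [← span_gfam_eq k hk, finrank_span_eq_card (gfam_li k)]
  simp [Fintype.card_sum, Fintype.card_coe]

lemma Egf_card (k : ℕ) : (Egf k).card = (k + k) * ((k + k) - 1) / 2 := by
  simp only [Egf]
  rw [SimpleGraph.card_edgeFinset_top_eq_card_choose_two, Fintype.card_fin,
    Nat.choose_two_right]


/-- Recover the pair (S, M) from a characteristic vector. -/
noncomputable def recov (k : ℕ) (p : (Fin (k + k) → ℝ) × (Sym2 (Fin (k + k)) → ℝ)) :
    Finset (Fin (k + k)) × Finset (Sym2 (Fin (k + k))) :=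
  (Finset.univ.filter (fun v => p.1 v = 1), (Egf k).filter (fun f => p.2 f = 1))

lemma recov_charVec (k : ℕ) (S : Finset (Fin (k + k))) (M : Finset (Sym2 (Fin (k + k))))
    (hM : ↑M ⊆ (⊤ : SimpleGraph (Fin (k + k))).edgeSet) :
    recov k (charVec S M) = (S, M) := by
  refine Prod.ext ?_ ?_
  · ext v
    by_cases hv : v ∈ S <;> simp [recov, charVec, hv]
  · ext f
    by_cases hf : f ∈ M
    · have hd : ¬ f.IsDiag := by
        have := hM hf
        rwa [SimpleGraph.edgeSet_top] at this
      simp [recov, charVec, hf, Egf, hd]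
    · simp [recov, charVec, hf]

lemma exists_facet_points (k : ℕ) (hk : 0 < k) :
    ∃ F : Finset (Finset (Fin (k + k)) × Finset (Sym2 (Fin (k + k)))),
      F.card = (k + k) + (k + k) * ((k + k) - 1) / 2 ∧
      (∀ q ∈ F, IsTotalMatching (⊤ : SimpleGraph (Fin (k + k))) q.1 q.2 ∧
        2 * (q.1.card + q.2.card) = k + k) ∧
      AffineIndependent ℝ (fun q : F => charVec q.1.1 q.1.2) := by
  classical
  obtain ⟨b, hbT, hbspan, hbli⟩ := exists_linearIndependent ℝ (T k)
  have hbfin : b.Finite := hbli.setFinite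
  haveI := hbfin.fintype
  have hcardb : b.toFinset.card = (k + k) + (k + k) * ((k + k) - 1) / 2 := by
    rw [← finrank_span_set_eq_card hbli, hbspan, finrank_span_T k hk, Egf_card]
  have hinj : Set.InjOn (recov k) (b.toFinset : Set _) := by
    intro p hp p' hp' hpp'
    have hp1 : p ∈ b := by
      rw [Finset.mem_coe, Set.mem_toFinset] at hp; exact hp
    have hp2 : p' ∈ b := by
      rw [Finset.mem_coe, Set.mem_toFinset] at hp'; exact hp'
    obtain ⟨S, M, htm, _, rfl⟩ := hbT hp1
    obtain ⟨S', M', htm', _, rfl⟩ := hbT hp2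
    rw [recov_charVec k S M htm.1, recov_charVec k S' M' htm'.1] at hpp'
    rw [Prod.mk.injEq] at hpp'
    rw [hpp'.1, hpp'.2]
  refine ⟨b.toFinset.image (recov k), ?_, ?_, ?_⟩
  · rw [Finset.card_image_of_injOn hinj]
    exact hcardb
  · intro q hq
    obtain ⟨p, hp, rfl⟩ := Finset.mem_image.1 hq
    rw [Set.mem_toFinset] at hp
    obtain ⟨S, M, htm, hcard, rfl⟩ := hbT hp
    rw [recov_charVec k S M htm.1]
    exact ⟨htm, hcard⟩
  · set F := b.toFinset.image (recov k) with hF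
    have hmem : ∀ q : {x // x ∈ F}, charVec q.1.1 q.1.2 ∈ b ∧
        recov k (charVec q.1.1 q.1.2) = q.1 := by
      rintro ⟨q, hq⟩
      obtain ⟨p, hp, rfl⟩ := Finset.mem_image.1 hq
      rw [Set.mem_toFinset] at hp
      obtain ⟨S, M, htm, hcard, rfl⟩ := hbT hp
      simp only [recov_charVec k S M htm.1]
      exact ⟨hp, trivial⟩
    set ψ : {x // x ∈ F} → b := fun q => ⟨charVec q.1.1 q.1.2, (hmem q).1⟩ with hψ
    have hψinj : Function.Injective ψ := by
      intro q q' h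
      have h2 : charVec q.1.1 q.1.2 = charVec q'.1.1 q'.1.2 :=
        congrArg Subtype.val h
      have := (hmem q).2.symm.trans ((congrArg (recov k) h2).trans (hmem q').2)
      exact Subtype.ext this
    have hli : LinearIndependent ℝ (fun q : {x // x ∈ F} => charVec q.1.1 q.1.2) :=
      hbli.comp ψ hψinj
    exact affineIndependent_iff.2 fun s w _ hw => linearIndependent_iff'.1 hli s w hw


lemma card_bound (k : ℕ) (S : Finset (Fin (k + k))) (M : Finset (Sym2 (Fin (k + k))))
    (htm : IsTotalMatching (⊤ : SimpleGraph (Fin (k + k))) S M) :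
    2 * (S.card + M.card) ≤ k + k := by
  classical
  obtain ⟨h1, h2, h3, h4⟩ := htm
  have hS : S.card ≤ 1 := Finset.card_le_one.2 fun a ha b hb => by
    by_contra hne
    exact h2 a ha b hb ((SimpleGraph.top_adj a b).2 hne)
  set C := M.biUnion (fun e => Finset.univ.filter (· ∈ e)) with hCdef
  have hC : C.card = 2 * M.card := by
    rw [hCdef, Finset.card_biUnion]
    · have h2' : ∀ e ∈ M, (Finset.univ.filter (· ∈ e)).card = 2 := by
        intro e he
        have hd : ¬ e.IsDiag := by
          have := h1 he
          rwa [SimpleGraph.edgeSet_top] at this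
        induction e with
        | _ a b =>
          have hab : a ≠ b := fun h => hd (Sym2.mk_isDiag_iff.2 h)
          have : Finset.univ.filter (· ∈ s(a, b)) = {a, b} := by
            ext v
            simp [Sym2.mem_iff]
          rw [this, Finset.card_pair hab]
      rw [Finset.sum_congr rfl h2', Finset.sum_const, smul_eq_mul, mul_comm]
    · intro e he f hf hef
      refine Finset.disjoint_left.2 fun v hv1 hv2 => ?_
      rw [Finset.mem_filter] at hv1 hv2
      exact h3 e he f hf hef v ⟨hv1.2, hv2.2⟩
  have hdisj : Disjoint S C := Finset.disjoint_left.2 fun v hv hvC => by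
    obtain ⟨e, he, hve⟩ := Finset.mem_biUnion.1 hvC
    exact h4 v hv e he (Finset.mem_filter.1 hve).2
  have hle : (S ∪ C).card ≤ k + k := by
    have := Finset.card_le_univ (S ∪ C)
    rwa [Fintype.card_fin] at this
  rw [Finset.card_union_of_disjoint hdisj, hC] at hle
  omega

lemma polytope_valid (k : ℕ) :
    ∀ p ∈ totalMatchingPolytope (⊤ : SimpleGraph (Fin (k + k))),
      ∑ v : Fin (k + k), p.1 v +
        ∑ e ∈ (⊤ : SimpleGraph (Fin (k + k))).edgeFinset, p.2 e ≤ ((k + k : ℕ) : ℝ) / 2 := by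
  intro p hp
  set f : (Fin (k + k) → ℝ) × (Sym2 (Fin (k + k)) → ℝ) → ℝ :=
    fun p => ∑ v : Fin (k + k), p.1 v +
      ∑ e ∈ (⊤ : SimpleGraph (Fin (k + k))).edgeFinset, p.2 e with hfdef
  have hlin : IsLinearMap ℝ f := by
    constructor
    · intro x y
      simp only [hfdef, Prod.fst_add, Prod.snd_add, Pi.add_apply, Finset.sum_add_distrib]
      ring
    · intro c x
      simp only [hfdef, Prod.smul_fst, Prod.smul_snd, Pi.smul_apply, smul_eq_mul,
        ← Finset.mul_sum]
      ring
  have hsub : {p | ∃ S M, IsTotalMatching (⊤ : SimpleGraph (Fin (k + k))) S M ∧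
      p = charVec S M} ⊆ {w | f w ≤ ((k + k : ℕ) : ℝ) / 2} := by
    rintro _ ⟨S, M, htm, rfl⟩
    have hb := card_bound k S M htm
    have hME : M ⊆ (⊤ : SimpleGraph (Fin (k + k))).edgeFinset := fun e he =>
      SimpleGraph.mem_edgeFinset.2 (htm.1 he)
    have h1 : ∑ v : Fin (k + k), (charVec S M).1 v = (S.card : ℝ) := by
      simp only [charVec, Finset.sum_boole, Finset.filter_mem_eq_inter, Finset.univ_inter]
    have h2 : ∑ e ∈ (⊤ : SimpleGraph (Fin (k + k))).edgeFinset, (charVec S M).2 e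
        = (M.card : ℝ) := by
      simp only [charVec, Finset.sum_boole, Finset.filter_mem_eq_inter]
      rw [Finset.inter_eq_right.2 hME]
    show f _ ≤ _
    rw [hfdef]
    simp only []
    rw [h1, h2]
    have hcast : (2 : ℝ) * ((S.card : ℝ) + (M.card : ℝ)) ≤ ((k + k : ℕ) : ℝ) := by
      exact_mod_cast hb
    linarith
  rw [totalMatchingPolytope] at hp
  exact convexHull_min hsub (convex_halfSpace_le hlin _) hp

end EvenCliqueAux

/-- For the complete graph `K_h` with `h ≥ 2` even, the even-clique inequality
`∑_v x_v + ∑_e y_e ≤ h/2` is valid for the total matching polytope of `K_h` (every total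
matching of `K_h` has cardinality at most `h/2`) and facet-defining: there exist
`n + m = h + h(h-1)/2` affinely independent characteristic vectors of total matchings of
`K_h` of cardinality exactly `h/2`. -/
theorem even_clique_facet_complete (h : ℕ) (hh : 2 ≤ h) (heven : Even h) :
    (∀ (S : Finset (Fin h)) (M : Finset (Sym2 (Fin h))),
      IsTotalMatching (⊤ : SimpleGraph (Fin h)) S M → 2 * (S.card + M.card) ≤ h) ∧
    (∀ p ∈ totalMatchingPolytope (⊤ : SimpleGraph (Fin h)),
      ∑ v : Fin h, p.1 v + ∑ e ∈ (⊤ : SimpleGraph (Fin h)).edgeFinset, p.2 e ≤ (h : ℝ) / 2) ∧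
    ∃ F : Finset (Finset (Fin h) × Finset (Sym2 (Fin h))),
      F.card = h + h * (h - 1) / 2 ∧
      (∀ q ∈ F, IsTotalMatching (⊤ : SimpleGraph (Fin h)) q.1 q.2 ∧
        2 * (q.1.card + q.2.card) = h) ∧
      AffineIndependent ℝ (fun q : F => charVec q.1.1 q.1.2) := by
  obtain ⟨k, rfl⟩ := heven
  have hk : 0 < k := by omega
  exact ⟨fun S M htm => EvenCliqueAux.card_bound k S M htm,
    EvenCliqueAux.polytope_valid k,
    EvenCliqueAux.exists_facet_points k hk⟩
end

section
/- Let G=(V,E) be a finite simple graph, let h be an odd positive integer, let Q ⊆ V be a clique of size h inducing K_h, and suppose there is a vertex u ∉ Q such that Q ∪ {u} is also a clique of G, inducing K_{h+1}. Then: (a) the odd-clique inequality is valid, i.e. every total matching T of G satisfies |T ∩ (V(K_h) ∪ E(K_h))| ≤ (h+1)/2; (b) every total matching T with |T ∩ (V(K_h) ∪ E(K_h))| = (h+1)/2 also satisfies |T ∩ (V(K_{h+1}) ∪ E(K_{h+1}))| = (h+1)/2; and (c) there exists a total matching T' of G with |T' ∩ (V(K_{h+1}) ∪ E(K_{h+1}))|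 = (h+1)/2 but |T' ∩ (V(K_h) ∪ E(K_h))| < (h+1)/2. Consequently the face of the Total Matching Polytope P_T(G) induced by the odd-clique inequality on K_h is strictly contained in the face induced by the even-clique inequality on K_{h+1}, so the odd-clique inequality is not facet-defining. -/
open Finset

variable {V : Type*}

/-!
A total matching meets a clique `Q` in at most one vertex, and the edges it has inside `Q`
cover pairwise disjoint pairs of vertices of `Q` avoiding that vertex, so
`2 |T ∩ K| ≤ |Q| + 1`. For `|Q| = h` odd this is the odd-clique inequality, and for `Q ∪ {u}`
it is the even-clique inequality with the same right-hand side `(h + 1) / 2`; since the count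
can only grow from `Q` to `Q ∪ {u}`, every tight matching of the first is tight for the second.
The vertex `u` together with `(h - 1) / 2` disjoint edges of `Q` is tight for the second but
not for the first.
-/

section

variable [DecidableEq V] {G : SimpleGraph V} {S : Finset V} {M : Finset (Sym2 V)}

namespace IsTotalMatching

lemma card_inter_le_one (hT : IsTotalMatching G S M) {Q : Finset V} (hQ : G.IsClique ↑Q) :
    (S ∩ Q).card ≤ 1 :=
  card_le_one.mpr fun a ha b hb => by_contra fun hab =>
    hT.2.1 a (mem_inter.mp ha).1 b (mem_inter.mp hb).1
      (hQ (mem_inter.mp ha).2 (mem_inter.mp hb).2 hab)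

lemma insert_edge (hT : IsTotalMatching G S M) {a b : V} (hab : G.Adj a b)
    (haS : a ∉ S) (hbS : b ∉ S) (hM : ∀ e ∈ M, a ∉ e ∧ b ∉ e) :
    IsTotalMatching G S (insert s(a, b) M) := by
  obtain ⟨hMG, hSS, hMM, hSM⟩ := hT
  have hnew : ∀ e ∈ M, ∀ v, ¬(v ∈ s(a, b) ∧ v ∈ e) := by
    rintro e he v ⟨hv, hve⟩
    rcases Sym2.mem_iff.mp hv with rfl | rfl
    exacts [(hM e he).1 hve, (hM e he).2 hve]
  refine ⟨?_, hSS, ?_, ?_⟩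
  · simpa [Set.insert_subset_iff] using ⟨hab, hMG⟩
  · intro e he f hf hef v
    rcases mem_insert.mp he with rfl | he <;> rcases mem_insert.mp hf with rfl | hf
    · exact absurd rfl hef
    · exact hnew f hf v
    · exact fun hv => hnew e he v hv.symm
    · exact hMM e he f hf hef v
  · intro v hv e he
    rcases mem_insert.mp he with rfl | he
    · intro hve
      rcases Sym2.mem_iff.mp hve with rfl | rfl <;> contradiction
    · exact hSM v hv e he

end IsTotalMatching

lemma exists_isTotalMatching_of_isClique (hS : IsTotalMatching G S ∅) {Q : Finset V}
    (hQ : G.IsClique ↑Q) (hSQ : Disjoint S Q) :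
    ∃ M : Finset (Sym2 V), IsTotalMatching G S M ∧ (∀ e ∈ M, ∀ v ∈ e, v ∈ Q) ∧
      M.card = Q.card / 2 := by
  induction Q using Finset.strongInduction with
  | H Q ih =>
    by_cases hQ1 : Q.card ≤ 1
    · exact ⟨∅, hS, by simp, by rw [card_empty]; omega⟩
    obtain ⟨a, ha, b, hb, hab⟩ := one_lt_card.mp (not_le.mp hQ1)
    set Q' := (Q.erase a).erase b
    have hQ'Q : Q' ⊆ Q := (erase_subset _ _).trans (erase_subset _ _)
    have haQ' : a ∉ Q' := fun h => notMem_erase a Q (mem_of_mem_erase h)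
    have hbQ' : b ∉ Q' := notMem_erase b _
    have hQ'card : Q'.card + 2 = Q.card := by
      rw [card_erase_of_mem (mem_erase.mpr ⟨hab.symm, hb⟩), card_erase_of_mem ha]
      omega
    obtain ⟨M', hT', hM'Q', hM'card⟩ := ih Q' ⟨hQ'Q, fun h => haQ' (h ha)⟩
      (hQ.subset hQ'Q) (hSQ.mono_right hQ'Q)
    refine ⟨insert s(a, b) M', ?_, ?_, ?_⟩
    · exact hT'.insert_edge (hQ ha hb hab) (disjoint_right.mp hSQ ha) (disjoint_right.mp hSQ hb)
        fun e he => ⟨fun h => haQ' (hM'Q' e he a h), fun h => hbQ' (hM'Q' e he b h)⟩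
    · intro e he v hv
      rcases mem_insert.mp he with rfl | he
      · rcases Sym2.mem_iff.mp hv with rfl | rfl <;> assumption
      · exact hQ'Q (hM'Q' e he v hv)
    · rw [card_insert_of_notMem fun h => haQ' (hM'Q' _ h a (Sym2.mem_mk_left a b))]
      omega

variable [Fintype V]

/-- `|T ∩ (V(K) ∪ E(K))|` for the total matching `T = S ∪ M` and the complete subgraph `K`
on `Q`. -/
def inducedCard (S : Finset V) (M : Finset (Sym2 V)) (Q : Finset V) : ℕ :=
  (S ∩ Q).card + (M.filter fun e => ∀ v ∈ e, v ∈ Q).card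

lemma inducedCard_mono {Q Q' : Finset V} (hQ : Q ⊆ Q') :
    inducedCard S M Q ≤ inducedCard S M Q' :=
  add_le_add (card_le_card (inter_subset_inter_left hQ))
    (card_le_card (monotone_filter_right _ fun _ _ he v hv => hQ (he v hv)))

namespace IsTotalMatching

lemma card_inter_add_two_mul_card_filter_le (hT : IsTotalMatching G S M) (Q : Finset V) :
    (S ∩ Q).card + 2 * (M.filter fun e => ∀ v ∈ e, v ∈ Q).card ≤ Q.card := by
  obtain ⟨hMG, -, hMM, hSM⟩ := hT
  set MQ := M.filter fun e => ∀ v ∈ e, v ∈ Q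
  have hends : (MQ.biUnion Sym2.toFinset).card = 2 * MQ.card := by
    rw [card_biUnion, sum_const_nat, mul_comm]
    · intro e he
      exact Sym2.card_toFinset_of_not_isDiag e
        (G.not_isDiag_of_mem_edgeSet (hMG (mem_filter.mp he).1))
    · intro e he f hf hef
      refine disjoint_left.mpr fun v hve hvf => ?_
      exact hMM e (mem_filter.mp he).1 f (mem_filter.mp hf).1 hef v
        ⟨Sym2.mem_toFinset.mp hve, Sym2.mem_toFinset.mp hvf⟩
  have hdisj : Disjoint (S ∩ Q) (MQ.biUnion Sym2.toFinset) := by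
    refine disjoint_left.mpr fun v hv hve => ?_
    obtain ⟨e, he, hve⟩ := mem_biUnion.mp hve
    exact hSM v (mem_inter.mp hv).1 e (mem_filter.mp he).1 (Sym2.mem_toFinset.mp hve)
  have hsub : S ∩ Q ∪ MQ.biUnion Sym2.toFinset ⊆ Q := by
    refine union_subset inter_subset_right fun v hv => ?_
    obtain ⟨e, he, hve⟩ := mem_biUnion.mp hv
    exact (mem_filter.mp he).2 v (Sym2.mem_toFinset.mp hve)
  rw [← hends, ← card_union_of_disjoint hdisj]
  exact card_le_card hsub

lemma inducedCard_le (hT : IsTotalMatching G S M) {Q : Finset V} (hQ : G.IsClique ↑Q) :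
    inducedCard S M Q ≤ (Q.card + 1) / 2 := by
  have := hT.card_inter_le_one hQ
  have := hT.card_inter_add_two_mul_card_filter_le Q
  unfold inducedCard
  omega

end IsTotalMatching

end

/-- Let `Q` be a clique of odd size `h` of `G` contained in a clique `Q ∪ {u}` of size
`h + 1`. Then (a) the odd-clique inequality is valid: every total matching has at most
`(h+1)/2` elements in `K_h`; (b) every total matching with exactly `(h+1)/2` elements in
`K_h` also has exactly `(h+1)/2` elements in `K_{h+1}`; and (c) some total matching has
exactly `(h+1)/2` elements in `K_{h+1}` but fewer than `(h+1)/2` elements in `K_h`.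
Hence the face induced by the odd-clique inequality is strictly contained in the face
induced by the even-clique inequality on `K_{h+1}`, so it is not a facet. -/
theorem odd_clique_not_facet [Fintype V] [DecidableEq V]
    (G : SimpleGraph V) (Q : Finset V) (h : ℕ) (hodd : Odd h) (hcard : Q.card = h)
    (hQ : G.IsClique ↑Q) (u : V) (hu : u ∉ Q) (hQu : G.IsClique ↑(insert u Q)) :
    (∀ (S : Finset V) (M : Finset (Sym2 V)), IsTotalMatching G S M →
      (S ∩ Q).card + (M.filter fun e => ∀ v ∈ e, v ∈ Q).card ≤ (h + 1) / 2) ∧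
    (∀ (S : Finset V) (M : Finset (Sym2 V)), IsTotalMatching G S M →
      (S ∩ Q).card + (M.filter fun e => ∀ v ∈ e, v ∈ Q).card = (h + 1) / 2 →
      (S ∩ insert u Q).card +
        (M.filter fun e => ∀ v ∈ e, v ∈ insert u Q).card = (h + 1) / 2) ∧
    (∃ (S : Finset V) (M : Finset (Sym2 V)), IsTotalMatching G S M ∧
      (S ∩ insert u Q).card +
        (M.filter fun e => ∀ v ∈ e, v ∈ insert u Q).card = (h + 1) / 2 ∧
      (S ∩ Q).card + (M.filter fun e => ∀ v ∈ e, v ∈ Q).card < (h + 1) / 2) := by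
  obtain ⟨k, rfl⟩ := hodd
  have hQucard : (insert u Q).card = 2 * k + 2 := by rw [card_insert_of_notMem hu, hcard]
  have hodd_le (S M) (hT : IsTotalMatching G S M) : inducedCard S M Q ≤ k + 1 := by
    have := hT.inducedCard_le hQ; omega
  have heven_le (S M) (hT : IsTotalMatching G S M) : inducedCard S M (insert u Q) ≤ k + 1 := by
    have := hT.inducedCard_le hQu; omega
  refine ⟨fun S M hT => (hodd_le S M hT).trans_eq (by omega), fun S M hT hS => ?_, ?_⟩
  · exact le_antisymm ((heven_le S M hT).trans_eq (by omega))
      (hS.symm.le.trans (inducedCard_mono (subset_insert u Q)))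
  · have hTu : IsTotalMatching G {u} ∅ := by simp [IsTotalMatching]
    obtain ⟨M, hT, hMQ, hMcard⟩ := exists_isTotalMatching_of_isClique hTu hQ
      (disjoint_singleton_left.mpr hu)
    have hMQu : ∀ e ∈ M, ∀ v ∈ e, v ∈ insert u Q := fun e he v hv =>
      mem_insert_of_mem (hMQ e he v hv)
    refine ⟨{u}, M, hT, ?_, ?_⟩
    · rw [filter_true_of_mem hMQu, singleton_inter_of_mem (mem_insert_self u Q)]
      simp only [card_singleton, hMcard, hcard]
      omega
    · rw [filter_true_of_mem hMQ, singleton_inter_of_notMem hu]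
      simp only [card_empty, hMcard, hcard]
      omega
end
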